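/- Fix n ≥ 2 and 1 ≤ k ≤ n, and let (1^k) denote the single-column partition. For every permutation w ∈ S_n and every reduced word (i_1,…,i_ℓ) of w, the β-character of the K-Demazure crystal equals the Lascoux polynomial: Σ_{T ∈ SVT^n_{(i_1,…,i_ℓ)}((1^k))} β^{excess(T)} x^{wt(T)} = ϖ_{i_1} ϖ_{i_2} ⋯ ϖ_{i_ℓ}( x_1 x_2 ⋯ x_k ) in ℤ[β][x_1,…,x_n]. In particular, for any reduced word of the longest element w_0 of S_n, SVT^n_{w_0}((1^k)) = SVT^n((1^k)) and ϖ_{w_0}(x_1⋯x_k) = 𝔊_{(1^k)}(x_1,…,x_n;β). -/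

import Mathlib

open scoped Classical

noncomputable section

namespace SVTCrystal

/-- A filling assigns to each (row, column) position (0-indexed) a finite set of entries. -/
abbrev Filling : Type := ℕ → ℕ → Finset ℕ

/-- `lam` is a partition shape with at most `n` rows. -/
def IsPartitionShape (n : ℕ) (lam : ℕ → ℕ) : Prop :=
  (∀ r, lam (r + 1) ≤ lam r) ∧ (∀ r, n ≤ r → lam r = 0)

/-- Semistandard set-valued tableau of shape `lam` with entries in `{1,…,n}`. -/
structure IsSVT (n : ℕ) (lam : ℕ → ℕ) (t : Filling) : Prop where
  boxNonempty : ∀ r c, c < lam r → (t r c).Nonempty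
  emptyOutside : ∀ r c, ¬ c < lam r → t r c = ∅
  entryBounds : ∀ r c a, a ∈ t r c → 1 ≤ a ∧ a ≤ n
  rowWeak : ∀ r c a b, a ∈ t r c → b ∈ t r (c + 1) → a ≤ b
  colStrict : ∀ r c a b, a ∈ t r c → b ∈ t (r + 1) c → a < b

/-- Semistandard Young tableau: a set-valued tableau all of whose boxes are singletons. -/
def IsSSYT (n : ℕ) (lam : ℕ → ℕ) (t : Filling) : Prop :=
  IsSVT n lam t ∧ ∀ r c, c < lam r → (t r c).card = 1

/-- The weight: `wt n lam t j` is the number of boxes of `t` containing the entry `j`. -/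
def wt (n : ℕ) (lam : ℕ → ℕ) (t : Filling) (j : ℕ) : ℕ :=
  ((Finset.range n ×ˢ Finset.range (lam 0)).filter (fun p => j ∈ t p.1 p.2)).card

/-- The excess: total number of extra entries. -/
def excess (n : ℕ) (lam : ℕ → ℕ) (t : Filling) : ℕ :=
  ∑ p ∈ Finset.range n ×ˢ Finset.range (lam 0), ((t p.1 p.2).card - 1)

/-- Column `c` contains the entry `a`. -/
def colHas (n : ℕ) (t : Filling) (a c : ℕ) : Prop := ∃ r, r < n ∧ a ∈ t r c

/-- The sign of column `c` for the `i`-signature rule: `+` (true) if the column contains `i`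
but not `i+1`, `-` (false) if it contains `i+1` but not `i`. -/
def colSign (n : ℕ) (t : Filling) (i c : ℕ) : Option Bool :=
  if colHas n t i c ∧ ¬ colHas n t (i + 1) c then some true
  else if colHas n t (i + 1) c ∧ ¬ colHas n t i c then some false
  else none

/-- The number of `-` (false) signs left uncanceled after scanning the word left-to-right,
iteratively canceling `-+` pairs. -/
def mctr (w : List Bool) : ℕ := w.foldl (fun cnt b => if b then cnt - 1 else cnt + 1) 0

/-- The number of `+` (true) signs left uncanceled, scanning right-to-left. -/
def pctr (w : List Bool) : ℕ := w.foldr (fun b cnt => if b then cnt + 1 else cnt - 1) 0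

/-- The word of column signs of the columns before column `c`. -/
def colWordBefore (n : ℕ) (t : Filling) (i c : ℕ) : List Bool :=
  (List.range c).filterMap (colSign n t i)

/-- The word of column signs of the columns after column `c` (among columns `< ncols`). -/
def colWordAfter (n ncols : ℕ) (t : Filling) (i c : ℕ) : List Bool :=
  ((List.range ncols).drop (c + 1)).filterMap (colSign n t i)

/-- Column `c` carries an uncanceled `+` for the `i`-signature rule. -/
def PlusCol (n ncols : ℕ) (t : Filling) (i c : ℕ) : Prop :=
  c < ncols ∧ colSign n t i c = some true ∧ mctr (colWordBefore n t i c) = 0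

/-- Column `c` carries an uncanceled `-` for the `i`-signature rule. -/
def MinusCol (n ncols : ℕ) (t : Filling) (i c : ℕ) : Prop :=
  c < ncols ∧ colSign n t i c = some false ∧ pctr (colWordAfter n ncols t i c) = 0

/-- Column `c` is the rightmost uncanceled `+`. -/
def fBoxCol (n ncols : ℕ) (t : Filling) (i c : ℕ) : Prop :=
  PlusCol n ncols t i c ∧ ∀ c', PlusCol n ncols t i c' → c' ≤ c

/-- Column `c` is the leftmost uncanceled `-`. -/
def eBoxCol (n ncols : ℕ) (t : Filling) (i c : ℕ) : Prop :=
  MinusCol n ncols t i c ∧ ∀ c', MinusCol n ncols t i c' → c ≤ c'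

/-- Replace the content of the box in row `r`, column `c` by `A`. -/
def updateBox (t : Filling) (r c : ℕ) (A : Finset ℕ) : Filling :=
  fun r' c' => if r' = r ∧ c' = c then A else t r' c'

/-- The set-valued crystal operator `f_i` (signature rule). -/
def fRaw (n : ℕ) (lam : ℕ → ℕ) (i : ℕ) (t : Filling) : Option Filling :=
  if h : ∃ c, fBoxCol n (lam 0) t i c then
    let c := Classical.choose h
    if hr : ∃ r, r < n ∧ i ∈ t r c then
      let r := Classical.choose hr
      if i ∈ t r (c + 1) then
        some (updateBox (updateBox t r (c + 1) ((t r (c + 1)).erase i)) r c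
          (insert (i + 1) (t r c)))
      else some (updateBox t r c (insert (i + 1) ((t r c).erase i)))
    else none
  else none

/-- The set-valued crystal operator `e_i` (signature rule). -/
def eRaw (n : ℕ) (lam : ℕ → ℕ) (i : ℕ) (t : Filling) : Option Filling :=
  if h : ∃ c, eBoxCol n (lam 0) t i c then
    let c := Classical.choose h
    if hr : ∃ r, r < n ∧ (i + 1) ∈ t r c then
      let r := Classical.choose hr
      if 0 < c ∧ (i + 1) ∈ t r (c - 1) then
        some (updateBox (updateBox t r (c - 1) ((t r (c - 1)).erase (i + 1))) r c
          (insert i (t r c)))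
      else some (updateBox t r c (insert i ((t r c).erase (i + 1))))
    else none
  else none

/-- Iterate a partially-defined operator. -/
def iterOpt (g : Filling → Option Filling) : ℕ → Filling → Option Filling
  | 0, t => some t
  | m + 1, t => (iterOpt g m t).bind g

/-- Highest weight (Yamanouchi) elements. -/
def IsYamanouchi (n : ℕ) (lam : ℕ → ℕ) (t : Filling) : Prop :=
  ∀ i, 1 ≤ i → i < n → eRaw n lam i t = none

/-- Closure of `t0` under the crystal operators `e_i`, `f_i` for `1 ≤ i < n`. -/
inductive Reach (n : ℕ) (lam : ℕ → ℕ) (t0 : Filling) : Filling → Prop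
  | base : Reach n lam t0 t0
  | stepF : ∀ {t t' : Filling} (i : ℕ), 1 ≤ i → i < n → Reach n lam t0 t →
      fRaw n lam i t = some t' → Reach n lam t0 t'
  | stepE : ∀ {t t' : Filling} (i : ℕ), 1 ≤ i → i < n → Reach n lam t0 t →
      eRaw n lam i t = some t' → Reach n lam t0 t'

/-- The one-row partition `(s)`. -/
def rowShape (s : ℕ) : ℕ → ℕ := fun r => if r = 0 then s else 0

/-- The one-column partition `(1^k)`. -/
def colShape (k : ℕ) : ℕ → ℕ := fun r => if r < k then 1 else 0

/-- The hook partition `(s, 1^e)`. -/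
def hookShape (s e : ℕ) : ℕ → ℕ := fun r => if r = 0 then s else if r ≤ e then 1 else 0

/-! ### K-theory crystal operators (for single rows and single columns) -/

/-- Some box of the tableau contains the entry `a`. -/
def containsEntry (n : ℕ) (lam : ℕ → ℕ) (t : Filling) (a : ℕ) : Prop :=
  ∃ r c, r < n ∧ c < lam r ∧ a ∈ t r c

/-- `p` is the rightmost box of `t` containing `i`. -/
def KBoxF (n : ℕ) (lam : ℕ → ℕ) (t : Filling) (i : ℕ) (p : ℕ × ℕ) : Prop :=
  p.1 < n ∧ p.2 < lam p.1 ∧ i ∈ t p.1 p.2 ∧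
    ∀ q : ℕ × ℕ, q.1 < n → q.2 < lam q.1 → i ∈ t q.1 q.2 → q.2 ≤ p.2

/-- The K-crystal operator `f_i^K`: if `i` occurs in `t` and `i+1` does not, add `i+1` to
the rightmost box containing `i`; otherwise `0`. -/
def fK (n : ℕ) (lam : ℕ → ℕ) (i : ℕ) (t : Filling) : Option Filling :=
  if h : (∃ p : ℕ × ℕ, KBoxF n lam t i p) ∧ ¬ containsEntry n lam t (i + 1) then
    let p := Classical.choose h.1
    some (updateBox t p.1 p.2 (insert (i + 1) (t p.1 p.2)))
  else none

/-- The K-crystal operator `e_i^K`: delete `i+1` from the box containing both `i` and `i+1`,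
if such a box exists; otherwise `0`. -/
def eK (n : ℕ) (lam : ℕ → ℕ) (i : ℕ) (t : Filling) : Option Filling :=
  if h : ∃ p : ℕ × ℕ, p.1 < n ∧ p.2 < lam p.1 ∧ i ∈ t p.1 p.2 ∧ (i + 1) ∈ t p.1 p.2 then
    let p := Classical.choose h
    some (updateBox t p.1 p.2 ((t p.1 p.2).erase (i + 1)))
  else none

/-- `t'` is the result of applying `g` to `t` as many times as possible. -/
def MaxApply (g : Filling → Option Filling) (t t' : Filling) : Prop :=
  (∃ m, iterOpt g m t = some t') ∧ g t' = none

/-- One Demazure step: apply `e_i` as many times as possible, then `e_i^K` as many times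
as possible (here `eKop i` is the `i`-th K-operator). -/
def DemStep (n : ℕ) (lam : ℕ → ℕ) (eKop : ℕ → Filling → Option Filling) (i : ℕ)
    (t t' : Filling) : Prop :=
  ∃ t1, MaxApply (eRaw n lam i) t t1 ∧ MaxApply (eKop i) t1 t'

/-- `DemReach n lam eKop [i₁,…,iℓ] t u` holds when
`u = (e_{iℓ}^K)^max e_{iℓ}^max ⋯ (e_{i₁}^K)^max e_{i₁}^max t`. -/
def DemReach (n : ℕ) (lam : ℕ → ℕ) (eKop : ℕ → Filling → Option Filling) :
    List ℕ → Filling → Filling → Prop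
  | [], t, u => t = u
  | i :: rest, t, u => ∃ t2, DemStep n lam eKop i t t2 ∧ DemReach n lam eKop rest t2 u

/-- The minimal highest weight tableau `u_λ`, whose row `r` boxes are all `{r+1}`. -/
def uTab (lam : ℕ → ℕ) : Filling := fun r c => if c < lam r then {r + 1} else ∅

/-- The K-Demazure crystal associated with a word `[i₁,…,iℓ]`. -/
def KDem (n : ℕ) (lam : ℕ → ℕ) (eKop : ℕ → Filling → Option Filling) (word : List ℕ) :
    Set Filling :=
  {t | IsSVT n lam t ∧ DemReach n lam eKop word t (uTab lam)}

/-! ### Permutations and reduced words -/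

/-- The permutation `s_{i₁} ⋯ s_{iℓ}` of a word `[i₁,…,iℓ]`, where `s_i` swaps `i`, `i+1`. -/
def wordPerm (word : List ℕ) : Equiv.Perm ℕ :=
  (word.map fun i => Equiv.swap i (i + 1)).prod

/-- `word` is a reduced word for `w` in the Coxeter generators `s_1, …, s_{n-1}`. -/
def IsReducedWord (n : ℕ) (w : Equiv.Perm ℕ) (word : List ℕ) : Prop :=
  (∀ i ∈ word, 1 ≤ i ∧ i < n) ∧ wordPerm word = w ∧
    ∀ word' : List ℕ, (∀ i ∈ word', 1 ≤ i ∧ i < n) → wordPerm word' = w →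
      word.length ≤ word'.length

/-- The Coxeter length of a permutation of `{1,…,n}`. -/
def permLength (n : ℕ) (σ : Equiv.Perm ℕ) : ℕ :=
  sInf {l | ∃ word : List ℕ, (∀ i ∈ word, 1 ≤ i ∧ i < n) ∧ wordPerm word = σ ∧
    word.length = l}

/-- The parabolic subgroup generated by `s_2, …, s_{n-1}`. -/
def parabolic (n : ℕ) : Subgroup (Equiv.Perm ℕ) :=
  Subgroup.closure {σ | ∃ i, 2 ≤ i ∧ i < n ∧ σ = Equiv.swap i (i + 1)}

/-! ### Polynomials -/

/-- Polynomials in `x₁, x₂, …` over `ℤ[β]`; the variable `β` is `Polynomial.X`. -/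
abbrev KPoly : Type := MvPolynomial ℕ (Polynomial ℤ)

/-- The scalar `β`. -/
def betaP : KPoly := MvPolynomial.C Polynomial.X

/-- The monomial `x^{wt(T)} = x₁^{wt₁} ⋯ xₙ^{wtₙ}`. -/
def xwt (n : ℕ) (lam : ℕ → ℕ) (t : Filling) : KPoly :=
  ∏ j ∈ Finset.Icc 1 n, (MvPolynomial.X j : KPoly) ^ wt n lam t j

/-- The β-character `∑_{T ∈ S} β^{excess T} x^{wt T}` of a set of tableaux. -/
def charSet (n : ℕ) (lam : ℕ → ℕ) (S : Set Filling) : KPoly :=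
  ∑ᶠ t ∈ S, betaP ^ excess n lam t * xwt n lam t

/-- The symmetric Grothendieck polynomial `𝔊_λ(x₁,…,xₙ; β)`. -/
def Groth (n : ℕ) (lam : ℕ → ℕ) : KPoly :=
  charSet n lam {t | IsSVT n lam t}

/-- The Schur polynomial `s_μ(x₁,…,xₙ)`. -/
def SchurP (n : ℕ) (mu : ℕ → ℕ) : KPoly :=
  ∑ᶠ t ∈ {t : Filling | IsSSYT n mu t}, xwt n mu t

/-- The numerator defining the Demazure–Lascoux operator `ϖ_i`. -/
def DLnum (i : ℕ) (f : KPoly) : KPoly :=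
  (MvPolynomial.X i + betaP * MvPolynomial.X i * MvPolynomial.X (i + 1)) * f -
    (MvPolynomial.X (i + 1) + betaP * MvPolynomial.X i * MvPolynomial.X (i + 1)) *
      (MvPolynomial.rename (Equiv.swap i (i + 1)) f)

/-- `DL` implements the Demazure–Lascoux operators `ϖ_i` for `1 ≤ i < n`:
`(x_i - x_{i+1}) · ϖ_i f` equals the defining numerator. -/
def IsDLOp (n : ℕ) (DL : ℕ → KPoly → KPoly) : Prop :=
  ∀ i, 1 ≤ i → i < n → ∀ f : KPoly,
    (MvPolynomial.X i - MvPolynomial.X (i + 1)) * DL i f = DLnum i f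

/-- `applyDL DL [i₁,…,iℓ] f = ϖ_{i₁} ϖ_{i₂} ⋯ ϖ_{iℓ} f`. -/
def applyDL (DL : ℕ → KPoly → KPoly) : List ℕ → KPoly → KPoly
  | [], f => f
  | i :: rest, f => DL i (applyDL DL rest f)



/-!
For a single column the Demazure step `(e_i^K)^max e_i^max` is a map `demazureStep i` of
tableaux: it lowers an `i+1` to `i` when `i` is absent, deletes `i+1` from a box holding `i` and
`i+1`, and fixes everything else. By induction on the word, the K-Demazure crystal is the set of
columns whose row-`r` entries are bounded by a key `wordKey k word r`, the key changing by a
0-Hecke move `bumpKey` at each letter.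

The character identity is then proved one letter at a time. Over a tableau `u` with `i` but not
`i+1`, the fibre of `demazureStep i` is the `i`-string `u, u[i ↦ i+1], u[+ (i+1)]`, whose
generating function is exactly `ϖ_i` of the monomial of `u`; over a column with `i` and `i+1` in
different boxes, or with neither, the fibre is `{u}` and `ϖ_i` fixes the symmetric monomial of `u`.
On the two remaining kinds of tableaux (fibre empty) `ϖ_i` produces terms that cancel in pairs
under the bijection adding `i` to the box of `i+1`.

For the longest element, the keys of any word dominate, in Gale order, the image of `{1,…,k}`
under the permutation of the word; for `w₀` this image is `{n-k+1,…,n}`, so the key imposes no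
condition beyond semistandardness.
-/

open Finset

section MaxApply

variable {g : Filling → Option Filling} {t u t' : Filling}

theorem iterOpt_succ' (g : Filling → Option Filling) (m : ℕ) (t : Filling) :
    iterOpt g (m + 1) t = (g t).bind (iterOpt g m) := by
  induction m generalizing t with
  | zero => simp [iterOpt]
  | succ m ih => rw [iterOpt, ih, Option.bind_assoc]; rfl

theorem eq_of_iterOpt_eq_some (hg : g t = none) {m : ℕ} (h : iterOpt g m t = some t') :
    t' = t := by
  cases m with
  | zero => exact (Option.some_inj.mp h).symm
  | succ m => rw [iterOpt_succ', hg] at h; cases h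

theorem maxApply_iff_of_eq_none (hg : g t = none) : MaxApply g t t' ↔ t' = t :=
  ⟨fun ⟨⟨_, hm⟩, _⟩ => eq_of_iterOpt_eq_some hg hm,
    by rintro rfl; exact ⟨⟨0, rfl⟩, hg⟩⟩

theorem maxApply_iff_of_eq_some (hgt : g t = some u) (hgu : g u = none) :
    MaxApply g t t' ↔ t' = u := by
  refine ⟨fun ⟨⟨m, hm⟩, hend⟩ => ?_,
    by rintro rfl; exact ⟨⟨1, by simp [iterOpt, hgt]⟩, hgu⟩⟩
  cases m with
  | zero => cases hm; rw [hgt] at hend; cases hend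
  | succ m => rw [iterOpt_succ', hgt] at hm; exact eq_of_iterOpt_eq_some hgu hm

end MaxApply

theorem colShape_le_one (k r : ℕ) : colShape k r ≤ 1 := by
  unfold colShape; split <;> omega

theorem colShape_pos_iff {k r : ℕ} : 0 < colShape k r ↔ r < k := by
  unfold colShape; split <;> omega

theorem colShape_zero {k : ℕ} (hk : 1 ≤ k) : colShape k 0 = 1 := by
  unfold colShape; rw [if_pos (by omega : 0 < k)]

def Occurs (t : Filling) (a : ℕ) : Prop := ∃ r, a ∈ t r 0

/-- Junk value `0` if `a` does not occur. -/
def rowOf (t : Filling) (a : ℕ) : ℕ :=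
  if h : Occurs t a then Classical.choose h else 0

theorem rowOf_mem {t : Filling} {a : ℕ} (h : Occurs t a) : a ∈ t (rowOf t a) 0 := by
  rw [rowOf, dif_pos h]; exact Classical.choose_spec h

theorem rowOf_eq {t : Filling} {a r : ℕ} (ha : a ∈ t r 0)
    (huniq : ∀ r', a ∈ t r' 0 → r' = r) : rowOf t a = r :=
  huniq _ (rowOf_mem ⟨r, ha⟩)

section Column

variable {n k : ℕ} {t : Filling}

theorem lt_and_eq_zero_of_mem (ht : IsSVT n (colShape k) t) {r c a : ℕ} (ha : a ∈ t r c) :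
    r < k ∧ c = 0 := by
  by_cases hc : c < colShape k r
  · have := colShape_le_one k r
    exact ⟨colShape_pos_iff.mp (by omega), by omega⟩
  · rw [ht.emptyOutside r c hc] at ha; simp at ha

theorem lt_of_mem_of_lt (ht : IsSVT n (colShape k) t) {r r' a b : ℕ} (ha : a ∈ t r 0)
    (hb : b ∈ t r' 0) (hr : r < r') : a < b := by
  induction r' generalizing b with
  | zero => omega
  | succ r' ih =>
    rcases Nat.lt_succ_iff_lt_or_eq.mp hr with h | rfl
    · obtain ⟨c, hc⟩ := ht.boxNonempty r' 0
        (colShape_pos_iff.mpr (by have := (lt_and_eq_zero_of_mem ht hb).1; omega))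
      exact (ih hc h).trans (ht.colStrict r' 0 c b hc hb)
    · exact ht.colStrict r 0 a b ha hb

theorem row_eq_of_mem (ht : IsSVT n (colShape k) t) {a r r' : ℕ}
    (h : a ∈ t r 0) (h' : a ∈ t r' 0) : r' = r := by
  rcases lt_trichotomy r r' with hr | hr | hr
  · exact absurd (lt_of_mem_of_lt ht h h' hr) (lt_irrefl a)
  · exact hr.symm
  · exact absurd (lt_of_mem_of_lt ht h' h hr) (lt_irrefl a)

theorem rowOf_eq_of_isSVT (ht : IsSVT n (colShape k) t) {a r : ℕ} (ha : a ∈ t r 0) :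
    rowOf t a = r :=
  rowOf_eq ha fun _ h => row_eq_of_mem ht ha h

theorem add_le_of_mem (ht : IsSVT n (colShape k) t) {r a : ℕ} (ha : a ∈ t r 0) :
    a + (k - 1 - r) ≤ n := by
  suffices ∀ d r a, a ∈ t r 0 → r + d < k → a + d ≤ n from
    this _ r a ha (by have := (lt_and_eq_zero_of_mem ht ha).1; omega)
  intro d
  induction d with
  | zero => intro r a ha _; exact (ht.entryBounds _ _ _ ha).2
  | succ d ih =>
    intro r a ha hrd
    obtain ⟨b, hb⟩ := ht.boxNonempty (r + 1) 0 (colShape_pos_iff.mpr (by omega))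
    have := ht.colStrict r 0 a b ha hb
    have := ih (r + 1) b hb (by omega)
    omega

end Column

section UpdateBox

variable {t : Filling} {r : ℕ} {A : Finset ℕ}

theorem updateBox_same (t : Filling) (r c : ℕ) (A : Finset ℕ) : updateBox t r c A r c = A := by
  simp [updateBox]

theorem updateBox_of_ne {c r' c' : ℕ} (h : ¬(r' = r ∧ c' = c)) :
    updateBox t r c A r' c' = t r' c' := by
  simp only [updateBox, if_neg h]

theorem mem_updateBox_iff {a r' : ℕ} :
    a ∈ updateBox t r 0 A r' 0 ↔ (r' = r ∧ a ∈ A) ∨ (r' ≠ r ∧ a ∈ t r' 0) := by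
  simp only [updateBox, and_true]; split_ifs with h <;> simp [h]

theorem updateBox_updateBox (t : Filling) (r c : ℕ) (A B : Finset ℕ) :
    updateBox (updateBox t r c A) r c B = updateBox t r c B := by
  funext r' c'; unfold updateBox; split <;> rfl

theorem updateBox_self (t : Filling) (r c : ℕ) : updateBox t r c (t r c) = t := by
  funext r' c'; unfold updateBox; split
  next h => rw [h.1, h.2]
  next => rfl

theorem occurs_updateBox_iff {j : ℕ} :
    Occurs (updateBox t r 0 A) j ↔ j ∈ A ∨ ∃ r', r' ≠ r ∧ j ∈ t r' 0 := by
  simp only [Occurs, mem_updateBox_iff]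
  constructor
  · rintro ⟨r', ⟨-, h⟩ | h⟩
    exacts [Or.inl h, Or.inr ⟨r', h⟩]
  · rintro (h | ⟨r', h⟩)
    exacts [⟨r, Or.inl ⟨rfl, h⟩⟩, ⟨r', Or.inr h⟩]

variable {n k : ℕ}

theorem isSVT_updateBox (ht : IsSVT n (colShape k) t) (hr : r < k)
    (hne : A.Nonempty) (hb : ∀ a ∈ A, 1 ≤ a ∧ a ≤ n)
    (hup : ∀ b ∈ A, ∀ a ∈ t (r + 1) 0, b < a)
    (hdn : ∀ r', r' + 1 = r → ∀ a ∈ t r' 0, ∀ b ∈ A, a < b) :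
    IsSVT n (colShape k) (updateBox t r 0 A) := by
  have hcol : ∀ r' c, c ≠ 0 → updateBox t r 0 A r' c = ∅ := fun r' c hc => by
    rw [updateBox_of_ne (by tauto)]
    exact ht.emptyOutside r' c (by have := colShape_le_one k r'; omega)
  constructor
  · intro r' c hc
    by_cases h : r' = r ∧ c = 0
    · rw [h.1, h.2, updateBox_same]; exact hne
    · rw [updateBox_of_ne h]; exact ht.boxNonempty r' c hc
  · intro r' c hc
    rw [updateBox_of_ne (by rintro ⟨rfl, rfl⟩; exact hc (colShape_pos_iff.mpr hr))]
    exact ht.emptyOutside r' c hc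
  · intro r' c a ha
    by_cases h : r' = r ∧ c = 0
    · rw [h.1, h.2, updateBox_same] at ha; exact hb a ha
    · rw [updateBox_of_ne h] at ha; exact ht.entryBounds r' c a ha
  · intro r' c a b _ hb'
    simp [hcol r' (c + 1) (by omega)] at hb'
  · intro r' c a b ha hb'
    rcases Nat.eq_zero_or_pos c with rfl | hc
    · rcases mem_updateBox_iff.mp ha with ⟨rfl, ha'⟩ | ⟨-, ha'⟩ <;>
        rcases mem_updateBox_iff.mp hb' with ⟨h, hb''⟩ | ⟨h, hb''⟩
      · omega
      · exact hup a ha' b hb''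
      · exact hdn r' h a ha' b hb''
      · exact ht.colStrict r' 0 a b ha' hb''
    · simp [hcol r' c (by omega)] at ha

theorem isSVT_updateBox_of_subset (ht : IsSVT n (colShape k) t) (hr : r < k)
    (hA : A ⊆ t r 0) (hne : A.Nonempty) : IsSVT n (colShape k) (updateBox t r 0 A) :=
  isSVT_updateBox ht hr hne (fun a ha => ht.entryBounds r 0 a (hA ha))
    (fun b hb a ha => ht.colStrict r 0 b a (hA hb) ha)
    (fun r' hr' a ha b hb => ht.colStrict r' 0 a b ha (hr' ▸ hA hb))

/-- As `b` is adjacent to `a` but absent from `t`, it cannot collide with the neighbours of `a`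
in the column. -/
theorem isSVT_updateBox_of_subset_insert (ht : IsSVT n (colShape k) t) {a b : ℕ}
    (ha : a ∈ t r 0) (hb : ¬ Occurs t b) (hadj : a = b + 1 ∨ b = a + 1) (hb1 : 1 ≤ b)
    (hbn : b ≤ n) (hA : A ⊆ insert b (t r 0)) (hne : A.Nonempty) :
    IsSVT n (colShape k) (updateBox t r 0 A) := by
  have hfresh : ∀ r', b ∉ t r' 0 := fun r' h => hb ⟨r', h⟩
  refine isSVT_updateBox ht (lt_and_eq_zero_of_mem ht ha).1 hne ?_ ?_ ?_
  · intro x hx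
    rcases mem_insert.mp (hA hx) with rfl | hx
    exacts [⟨hb1, hbn⟩, ht.entryBounds r 0 x hx]
  · intro x hx y hy
    rcases mem_insert.mp (hA hx) with rfl | hx
    · have := ht.colStrict r 0 a y ha hy
      have : y ≠ x := fun h => hfresh _ (h ▸ hy)
      omega
    · exact ht.colStrict r 0 x y hx hy
  · intro r' hr' y hy x hx
    subst hr'
    rcases mem_insert.mp (hA hx) with rfl | hx
    · have := ht.colStrict r' 0 y a hy ha
      have : y ≠ x := fun h => hfresh _ (h ▸ hy)
      omega
    · exact ht.colStrict r' 0 y x hy hx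

end UpdateBox

def replaceEntry (t : Filling) (a b : ℕ) : Filling :=
  updateBox t (rowOf t a) 0 (insert b ((t (rowOf t a) 0).erase a))

def insertEntry (t : Filling) (a b : ℕ) : Filling :=
  updateBox t (rowOf t a) 0 (insert b (t (rowOf t a) 0))

def eraseEntry (t : Filling) (a : ℕ) : Filling :=
  updateBox t (rowOf t a) 0 ((t (rowOf t a) 0).erase a)

section EntryOps

variable {n k : ℕ} {t : Filling} {a b : ℕ}

theorem rowOf_updateBox_of_not_occurs {r : ℕ} {A : Finset ℕ} (hb : ¬ Occurs t b)
    (hbA : b ∈ A) : rowOf (updateBox t r 0 A) b = r :=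
  rowOf_eq (by rw [updateBox_same]; exact hbA) fun r' h => by
    rcases mem_updateBox_iff.mp h with ⟨h, -⟩ | ⟨-, h⟩
    exacts [h, absurd ⟨r', h⟩ hb]

theorem replaceEntry_replaceEntry (ha : Occurs t a) (hb : ¬ Occurs t b) :
    replaceEntry (replaceEntry t a b) b a = t := by
  have hba : b ∉ (t (rowOf t a) 0).erase a := fun h => hb ⟨_, mem_of_mem_erase h⟩
  rw [replaceEntry, replaceEntry, rowOf_updateBox_of_not_occurs hb (mem_insert_self _ _),
    updateBox_same, updateBox_updateBox, erase_insert hba, insert_erase (rowOf_mem ha),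
    updateBox_self]

theorem eraseEntry_insertEntry (hb : ¬ Occurs t b) :
    eraseEntry (insertEntry t a b) b = t := by
  rw [eraseEntry, insertEntry, rowOf_updateBox_of_not_occurs hb (mem_insert_self _ _),
    updateBox_same, updateBox_updateBox, erase_insert fun h => hb ⟨_, h⟩, updateBox_self]

theorem insertEntry_eraseEntry (ht : IsSVT n (colShape k) t) {r : ℕ} (ha : a ∈ t r 0)
    (hb : b ∈ t r 0) (hab : a ≠ b) : insertEntry (eraseEntry t b) a b = t := by
  have hrow : rowOf (eraseEntry t b) a = r := by
    refine rowOf_eq ?_ fun r' h => ?_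
    · rw [eraseEntry, rowOf_eq_of_isSVT ht hb, updateBox_same]; exact mem_erase.mpr ⟨hab, ha⟩
    · rcases mem_updateBox_iff.mp h with ⟨h, -⟩ | ⟨-, h⟩
      · exact h.trans (rowOf_eq_of_isSVT ht hb)
      · exact row_eq_of_mem ht ha h
  rw [insertEntry, hrow, eraseEntry, rowOf_eq_of_isSVT ht hb, updateBox_same,
    updateBox_updateBox, insert_erase hb, updateBox_self]

theorem occurs_replaceEntry_iff (ht : IsSVT n (colShape k) t) (ha : Occurs t a) {j : ℕ} :
    Occurs (replaceEntry t a b) j ↔ (Occurs t j ∧ j ≠ a) ∨ j = b := by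
  have hrow := rowOf_mem ha
  rw [replaceEntry, occurs_updateBox_iff, mem_insert, mem_erase]
  constructor
  · rintro ((rfl | ⟨hj, h⟩) | ⟨r', hr, h⟩)
    · exact Or.inr rfl
    · exact Or.inl ⟨⟨_, h⟩, hj⟩
    · exact Or.inl ⟨⟨r', h⟩, fun hj => hr (row_eq_of_mem ht hrow (hj ▸ h))⟩
  · rintro (⟨⟨r', h⟩, hj⟩ | rfl)
    · by_cases hr : r' = rowOf t a
      · exact Or.inl (Or.inr ⟨hj, hr ▸ h⟩)
      · exact Or.inr ⟨r', hr, h⟩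
    · exact Or.inl (Or.inl rfl)

theorem occurs_insertEntry_iff {j : ℕ} :
    Occurs (insertEntry t a b) j ↔ Occurs t j ∨ j = b := by
  rw [insertEntry, occurs_updateBox_iff, mem_insert]
  constructor
  · rintro ((rfl | h) | ⟨r', -, h⟩)
    exacts [Or.inr rfl, Or.inl ⟨_, h⟩, Or.inl ⟨r', h⟩]
  · rintro (⟨r', h⟩ | rfl)
    · by_cases hr : r' = rowOf t a
      · exact Or.inl (Or.inr (hr ▸ h))
      · exact Or.inr ⟨r', hr, h⟩
    · exact Or.inl (Or.inl rfl)

theorem occurs_eraseEntry_iff (ht : IsSVT n (colShape k) t) {j : ℕ} :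
    Occurs (eraseEntry t a) j ↔ Occurs t j ∧ j ≠ a := by
  rw [eraseEntry, occurs_updateBox_iff, mem_erase]
  constructor
  · rintro (⟨hj, h⟩ | ⟨r', hr, h⟩)
    · exact ⟨⟨_, h⟩, hj⟩
    · refine ⟨⟨r', h⟩, fun hj => hr ?_⟩
      subst hj; exact (rowOf_eq_of_isSVT ht h).symm
  · rintro ⟨⟨r', h⟩, hj⟩
    by_cases hr : r' = rowOf t a
    · exact Or.inl ⟨hj, hr ▸ h⟩
    · exact Or.inr ⟨r', hr, h⟩

theorem isSVT_replaceEntry (ht : IsSVT n (colShape k) t) (ha : Occurs t a) (hb : ¬ Occurs t b)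
    (hadj : a = b + 1 ∨ b = a + 1) (hb1 : 1 ≤ b) (hbn : b ≤ n) :
    IsSVT n (colShape k) (replaceEntry t a b) :=
  isSVT_updateBox_of_subset_insert ht (rowOf_mem ha) hb hadj hb1 hbn
    (insert_subset_insert _ (erase_subset _ _)) (insert_nonempty _ _)

theorem isSVT_insertEntry (ht : IsSVT n (colShape k) t) (ha : Occurs t a) (hb : ¬ Occurs t b)
    (hadj : a = b + 1 ∨ b = a + 1) (hb1 : 1 ≤ b) (hbn : b ≤ n) :
    IsSVT n (colShape k) (insertEntry t a b) :=
  isSVT_updateBox_of_subset_insert ht (rowOf_mem ha) hb hadj hb1 hbn subset_rfl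
    (insert_nonempty _ _)

theorem isSVT_eraseEntry (ht : IsSVT n (colShape k) t) {r : ℕ} (ha : a ∈ t r 0)
    (hb : b ∈ t r 0) (hab : b ≠ a) : IsSVT n (colShape k) (eraseEntry t a) := by
  rw [← rowOf_eq_of_isSVT ht ha] at hb
  exact isSVT_updateBox_of_subset ht (lt_and_eq_zero_of_mem ht (rowOf_mem ⟨r, ha⟩)).1
    (erase_subset _ _) ⟨b, mem_erase.mpr ⟨hab, hb⟩⟩

end EntryOps

/-- The `i`-signature of a single column is `+`. -/
def IsPlus (i : ℕ) (t : Filling) : Prop := Occurs t i ∧ ¬ Occurs t (i + 1)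

/-- The `i`-signature of a single column is `-`. -/
def IsMinus (i : ℕ) (t : Filling) : Prop := Occurs t (i + 1) ∧ ¬ Occurs t i

def IsShared (i : ℕ) (t : Filling) : Prop := ∃ r, i ∈ t r 0 ∧ i + 1 ∈ t r 0

/-- On a single column, `e_i` only acts on a column of sign `-` and `e_i^K` only on a box holding
`i` and `i+1`; this is the resulting map `(e_i^K)^max e_i^max`. -/
def demazureStep (i : ℕ) (t : Filling) : Filling :=
  if IsMinus i t then replaceEntry t (i + 1) i
  else if IsShared i t then eraseEntry t (i + 1) else t

section Signs

variable {n k i : ℕ} {t : Filling}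

theorem IsShared.occurs (h : IsShared i t) : Occurs t i ∧ Occurs t (i + 1) :=
  ⟨⟨_, h.choose_spec.1⟩, ⟨_, h.choose_spec.2⟩⟩

theorem IsShared.not_isMinus (h : IsShared i t) : ¬ IsMinus i t := fun h' => h'.2 h.occurs.1

theorem IsShared.not_isPlus (h : IsShared i t) : ¬ IsPlus i t := fun h' => h'.2 h.occurs.2

theorem IsPlus.not_isMinus (h : IsPlus i t) : ¬ IsMinus i t := fun h' => h'.2 h.1

theorem isPlus_replaceEntry (ht : IsSVT n (colShape k) t) (h : IsMinus i t) :
    IsPlus i (replaceEntry t (i + 1) i) := by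
  simp [IsPlus, occurs_replaceEntry_iff ht h.1]

theorem isMinus_replaceEntry (ht : IsSVT n (colShape k) t) (h : IsPlus i t) :
    IsMinus i (replaceEntry t i (i + 1)) := by
  simp [IsMinus, occurs_replaceEntry_iff ht h.1]

theorem isPlus_eraseEntry (ht : IsSVT n (colShape k) t) (h : IsShared i t) :
    IsPlus i (eraseEntry t (i + 1)) := by
  simp [IsPlus, occurs_eraseEntry_iff ht, h.occurs.1]

theorem isMinus_eraseEntry (ht : IsSVT n (colShape k) t) (h : IsShared i t) :
    IsMinus i (eraseEntry t i) := by
  simp [IsMinus, occurs_eraseEntry_iff ht, h.occurs.2]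

theorem mem_insertEntry_rowOf {a b : ℕ} (ha : Occurs t a) :
    a ∈ insertEntry t a b (rowOf t a) 0 ∧ b ∈ insertEntry t a b (rowOf t a) 0 := by
  rw [insertEntry, updateBox_same]
  exact ⟨mem_insert_of_mem (rowOf_mem ha), mem_insert_self _ _⟩

theorem isShared_insertEntry_succ (h : Occurs t i) : IsShared i (insertEntry t i (i + 1)) :=
  ⟨_, (mem_insertEntry_rowOf h).1, (mem_insertEntry_rowOf h).2⟩

theorem isShared_insertEntry_pred (h : Occurs t (i + 1)) : IsShared i (insertEntry t (i + 1) i) :=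
  ⟨_, (mem_insertEntry_rowOf h).2, (mem_insertEntry_rowOf h).1⟩

theorem IsShared.mem_iff (ht : IsSVT n (colShape k) t) (h : IsShared i t) {r : ℕ} :
    i + 1 ∈ t r 0 ↔ i ∈ t r 0 := by
  obtain ⟨r₀, h₀, h₁⟩ := h
  constructor <;> intro hr
  · exact row_eq_of_mem ht h₁ hr ▸ h₀
  · exact row_eq_of_mem ht h₀ hr ▸ h₁

theorem demazureStep_of_isMinus (h : IsMinus i t) :
    demazureStep i t = replaceEntry t (i + 1) i := if_pos h

theorem demazureStep_of_isShared (h : IsShared i t) :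
    demazureStep i t = eraseEntry t (i + 1) := by
  rw [demazureStep, if_neg h.not_isMinus, if_pos h]

theorem demazureStep_of_not_isMinus_of_not_isShared (h₁ : ¬ IsMinus i t)
    (h₂ : ¬ IsShared i t) : demazureStep i t = t := by
  rw [demazureStep, if_neg h₁, if_neg h₂]

theorem isSVT_demazureStep (ht : IsSVT n (colShape k) t) (hi : 1 ≤ i) :
    IsSVT n (colShape k) (demazureStep i t) := by
  by_cases hm : IsMinus i t
  · rw [demazureStep_of_isMinus hm]
    have := (ht.entryBounds _ _ _ (rowOf_mem hm.1)).2
    exact isSVT_replaceEntry ht hm.1 hm.2 (Or.inl rfl) hi (by omega)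
  by_cases hs : IsShared i t
  · obtain ⟨r, h₀, h₁⟩ := hs
    rw [demazureStep_of_isShared ⟨r, h₀, h₁⟩]
    exact isSVT_eraseEntry ht h₁ h₀ (by omega)
  rwa [demazureStep_of_not_isMinus_of_not_isShared hm hs]

end Signs

section CrystalOnColumns

variable {n k i : ℕ} {t : Filling}

theorem colHas_zero_iff (hkn : k ≤ n) (ht : IsSVT n (colShape k) t) {a : ℕ} :
    colHas n t a 0 ↔ Occurs t a :=
  ⟨fun ⟨r, _, h⟩ => ⟨r, h⟩,
    fun ⟨r, h⟩ => ⟨r, (lt_and_eq_zero_of_mem ht h).1.trans_le hkn, h⟩⟩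

theorem exists_eBoxCol_iff (hk : 1 ≤ k) (hkn : k ≤ n) (ht : IsSVT n (colShape k) t) :
    (∃ c, eBoxCol n (colShape k 0) t i c) ↔ IsMinus i t := by
  have hsign : colSign n t i 0 = some false ↔ IsMinus i t := by
    simp only [colSign, IsMinus, colHas_zero_iff hkn ht]
    split_ifs <;> simp_all
  rw [colShape_zero hk]
  constructor
  · rintro ⟨c, ⟨hc, hsg, -⟩, -⟩
    obtain rfl : c = 0 := by omega
    exact hsign.mp hsg
  · intro h
    exact ⟨0, ⟨one_pos, hsign.mpr h, by simp [colWordAfter, pctr]⟩,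
      fun _ _ => Nat.zero_le _⟩

theorem eRaw_colShape (hk : 1 ≤ k) (hkn : k ≤ n) (ht : IsSVT n (colShape k) t) :
    eRaw n (colShape k) i t = if IsMinus i t then some (replaceEntry t (i + 1) i) else none := by
  by_cases hm : IsMinus i t
  · have hex := (exists_eBoxCol_iff hk hkn ht).mpr hm
    have hc0 : Classical.choose hex = 0 := by
      have h₁ := (Classical.choose_spec hex).1.1
      have h₂ := colShape_zero hk
      omega
    have hrex : ∃ r, r < n ∧ i + 1 ∈ t r 0 := (colHas_zero_iff hkn ht).mpr hm.1
    have hr : Classical.choose hrex = rowOf t (i + 1) :=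
      (rowOf_eq_of_isSVT ht (Classical.choose_spec hrex).2).symm
    rw [eRaw, dif_pos hex, if_pos hm]
    simp only [hc0]
    rw [dif_pos hrex]
    simp only [hr, lt_irrefl, false_and, if_false]
    rfl
  · rw [eRaw, dif_neg (mt (exists_eBoxCol_iff hk hkn ht).mp hm), if_neg hm]

theorem eK_colShape (hkn : k ≤ n) (ht : IsSVT n (colShape k) t) :
    eK n (colShape k) i t = if IsShared i t then some (eraseEntry t (i + 1)) else none := by
  have hiff : (∃ p : ℕ × ℕ, p.1 < n ∧ p.2 < colShape k p.1 ∧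
      i ∈ t p.1 p.2 ∧ i + 1 ∈ t p.1 p.2) ↔ IsShared i t := by
    constructor
    · rintro ⟨p, -, -, h₀, h₁⟩
      obtain ⟨-, hp⟩ := lt_and_eq_zero_of_mem ht h₀
      rw [hp] at h₀ h₁
      exact ⟨p.1, h₀, h₁⟩
    · rintro ⟨r, h₀, h₁⟩
      have hr := (lt_and_eq_zero_of_mem ht h₀).1
      exact ⟨(r, 0), hr.trans_le hkn, colShape_pos_iff.mpr hr, h₀, h₁⟩
  by_cases hs : IsShared i t
  · have hex := hiff.mpr hs
    obtain ⟨-, -, h₀, h₁⟩ := Classical.choose_spec hex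
    obtain ⟨-, hp2⟩ := lt_and_eq_zero_of_mem ht h₀
    rw [hp2] at h₁
    have hp1 := rowOf_eq_of_isSVT ht h₁
    rw [eK, dif_pos hex, if_pos hs, eraseEntry, hp1, ← hp2]
  · rw [eK, dif_neg (mt hiff.mp hs), if_neg hs]

theorem demStep_iff_of {lam : ℕ → ℕ} {eKop : ℕ → Filling → Option Filling}
    {t₁ t₂ t' : Filling} (h₁ : ∀ s, MaxApply (eRaw n lam i) t s ↔ s = t₁)
    (h₂ : ∀ s, MaxApply (eKop i) t₁ s ↔ s = t₂) :
    DemStep n lam eKop i t t' ↔ t' = t₂ := by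
  simp only [DemStep, h₁, exists_eq_left, h₂]

theorem demStep_iff (hk : 1 ≤ k) (hkn : k ≤ n) (ht : IsSVT n (colShape k) t) (hi : 1 ≤ i)
    {t' : Filling} :
    DemStep n (colShape k) (eK n (colShape k)) i t t' ↔ t' = demazureStep i t := by
  have heR := fun {s : Filling} (hs : IsSVT n (colShape k) s) => eRaw_colShape (i := i) hk hkn hs
  have heK := fun {s : Filling} (hs : IsSVT n (colShape k) s) => eK_colShape (i := i) hkn hs
  by_cases hm : IsMinus i t
  · have hu := isSVT_demazureStep ht hi
    rw [demazureStep_of_isMinus hm] at hu ⊢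
    have hp := isPlus_replaceEntry ht hm
    refine demStep_iff_of (fun s => maxApply_iff_of_eq_some (by rw [heR ht, if_pos hm]) ?_)
      fun s => maxApply_iff_of_eq_none ?_
    · rw [heR hu, if_neg hp.not_isMinus]
    · rw [heK hu, if_neg fun h => h.not_isPlus hp]
  by_cases hs : IsShared i t
  · have hu := isSVT_demazureStep ht hi
    rw [demazureStep_of_isShared hs] at hu ⊢
    refine demStep_iff_of (fun s => maxApply_iff_of_eq_none (by rw [heR ht, if_neg hm]))
      fun s => maxApply_iff_of_eq_some (by rw [heK ht, if_pos hs]) ?_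
    rw [heK hu, if_neg fun h => h.not_isPlus (isPlus_eraseEntry ht hs)]
  · rw [demazureStep_of_not_isMinus_of_not_isShared hm hs]
    exact demStep_iff_of (fun s => maxApply_iff_of_eq_none (by rw [heR ht, if_neg hm]))
      fun s => maxApply_iff_of_eq_none (by rw [heK ht, if_neg hs])

theorem kDem_cons (hk : 1 ≤ k) (hkn : k ≤ n) (hi : 1 ≤ i) (word : List ℕ) :
    KDem n (colShape k) (eK n (colShape k)) (i :: word) =
      {t | IsSVT n (colShape k) t ∧
        demazureStep i t ∈ KDem n (colShape k) (eK n (colShape k)) word} := by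
  ext t
  simp only [KDem, Set.mem_ofPred_eq, DemReach]
  constructor
  · rintro ⟨ht, t₂, hstep, hreach⟩
    obtain rfl := (demStep_iff hk hkn ht hi).mp hstep
    exact ⟨ht, isSVT_demazureStep ht hi, hreach⟩
  · rintro ⟨ht, -, hreach⟩
    exact ⟨ht, _, (demStep_iff hk hkn ht hi).mpr rfl, hreach⟩

end CrystalOnColumns

/-- The 0-Hecke generator `π_i` acting on a key `m` (the row bounds of a column). -/
def bumpKey (k i : ℕ) (m : ℕ → ℕ) : ℕ → ℕ :=
  fun r => if r < k ∧ m r = i ∧ ∀ r' < k, m r' ≠ i + 1 then i + 1 else m r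

def wordKey (k : ℕ) : List ℕ → ℕ → ℕ
  | [] => fun r => r + 1
  | i :: rest => bumpKey k i (wordKey k rest)

def keyBounded (n k : ℕ) (m : ℕ → ℕ) : Set Filling :=
  {t | IsSVT n (colShape k) t ∧ ∀ r < k, ∀ a ∈ t r 0, a ≤ m r}

section Keys

variable {n k i : ℕ} {m : ℕ → ℕ}

theorem bumpKey_eq_or (r : ℕ) :
    bumpKey k i m r = m r ∨
      (r < k ∧ m r = i ∧ (∀ r' < k, m r' ≠ i + 1) ∧ bumpKey k i m r = i + 1) := by
  unfold bumpKey
  split_ifs with h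
  exacts [Or.inr ⟨h.1, h.2.1, h.2.2, rfl⟩, Or.inl rfl]

theorem le_bumpKey (r : ℕ) : m r ≤ bumpKey k i m r := by
  rcases bumpKey_eq_or (k := k) (i := i) (m := m) r with h | h <;> omega

theorem strictMonoOn_bumpKey (hm : StrictMonoOn m (Set.Iio k)) :
    StrictMonoOn (bumpKey k i m) (Set.Iio k) := by
  intro r hr r' hr' hlt
  have := hm hr hr' hlt
  rcases bumpKey_eq_or (k := k) (i := i) (m := m) r with h | ⟨-, h₁, hfree, h₂⟩ <;>
    rcases bumpKey_eq_or (k := k) (i := i) (m := m) r' with h' | ⟨-, h₁', -, h₂'⟩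
  · omega
  · omega
  · have := hfree r' hr'; omega
  · omega

theorem strictMonoOn_wordKey (word : List ℕ) : StrictMonoOn (wordKey k word) (Set.Iio k) := by
  induction word with
  | nil => exact fun r _ r' _ h => by simp only [wordKey]; omega
  | cons i rest ih => exact strictMonoOn_bumpKey ih

/-- If the bound of row `r` is `i` and `i+1` is also a bound, it is the bound of row `r+1`, which
then forces `i+1` into the column. -/
theorem succ_le_bumpKey (hm : StrictMonoOn m (Set.Iio k)) {u : Filling}
    (hu : u ∈ keyBounded n k m) {r : ℕ} (hr : r < k) (hi : i ∈ u r 0)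
    (hnot : ¬ Occurs u (i + 1)) : i + 1 ≤ bumpKey k i m r := by
  have him := hu.2 r hr i hi
  rcases Nat.lt_or_ge i (m r) with hlt | hge
  · exact hlt.trans_le (le_bumpKey r)
  have hmr : m r = i := by omega
  suffices hfree : ∀ r' < k, m r' ≠ i + 1 by
    rw [bumpKey, if_pos ⟨hr, hmr, hfree⟩]
  intro r' hr' he
  have hrr' : r < r' := by
    by_contra! h
    have := hm.monotoneOn hr' hr h
    omega
  have hr1 : r + 1 < k := by omega
  have hmid : m (r + 1) = i + 1 := by
    have := hm hr hr1 (Nat.lt_succ_self r)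
    have := hm.monotoneOn hr1 hr' hrr'
    omega
  obtain ⟨b, hb⟩ := hu.1.boxNonempty (r + 1) 0 (colShape_pos_iff.mpr hr1)
  have := hu.1.colStrict r 0 i b hi hb
  have := hu.2 (r + 1) hr1 b hb
  obtain rfl : b = i + 1 := by omega
  exact hnot ⟨r + 1, hb⟩

variable {t : Filling}

theorem mem_demazureStep_of_ne {r a : ℕ} (ha : a ∈ t r 0)
    (hne : a ≠ i + 1) : a ∈ demazureStep i t r 0 := by
  have key : ∀ A : Finset ℕ, (a ∈ t (rowOf t (i + 1)) 0 → a ∈ A) →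
      a ∈ updateBox t (rowOf t (i + 1)) 0 A r 0 := fun A hA => by
    rw [mem_updateBox_iff]
    by_cases hr : r = rowOf t (i + 1)
    exacts [Or.inl ⟨hr, hA (hr ▸ ha)⟩, Or.inr ⟨hr, ha⟩]
  unfold demazureStep
  split_ifs
  · exact key _ fun h => mem_insert_of_mem (mem_erase.mpr ⟨hne, h⟩)
  · exact key _ fun h => mem_erase.mpr ⟨hne, h⟩
  · exact ha

theorem mem_demazureStep (ht : IsSVT n (colShape k) t) {r a : ℕ}
    (ha : a ∈ demazureStep i t r 0) :
    (a ∈ t r 0 ∧ a ≠ i + 1) ∨ (a = i ∧ i + 1 ∈ t r 0) ∨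
      (a = i + 1 ∧ a ∈ t r 0 ∧ ¬ IsMinus i t ∧ ¬ IsShared i t) := by
  have hrow : ∀ {r}, i + 1 ∈ t r 0 → rowOf t (i + 1) = r := rowOf_eq_of_isSVT ht
  unfold demazureStep replaceEntry eraseEntry at ha
  split_ifs at ha with hm hs
  · rcases mem_updateBox_iff.mp ha with ⟨rfl, h⟩ | ⟨hr, h⟩
    · rcases mem_insert.mp h with rfl | h
      · exact Or.inr (Or.inl ⟨rfl, rowOf_mem hm.1⟩)
      · exact Or.inl ⟨mem_of_mem_erase h, ne_of_mem_erase h⟩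
    · exact Or.inl ⟨h, fun he => hr (hrow (he ▸ h)).symm⟩
  · rcases mem_updateBox_iff.mp ha with ⟨rfl, h⟩ | ⟨hr, h⟩
    · exact Or.inl ⟨mem_of_mem_erase h, ne_of_mem_erase h⟩
    · exact Or.inl ⟨h, fun he => hr (hrow (he ▸ h)).symm⟩
  · by_cases he : a = i + 1
    exacts [Or.inr (Or.inr ⟨he, ha, hm, hs⟩), Or.inl ⟨ha, he⟩]

theorem mem_demazureStep_of_succ_mem (ht : IsSVT n (colShape k) t) {r : ℕ} (h : i + 1 ∈ t r 0)
    (hms : IsMinus i t ∨ IsShared i t) : i ∈ demazureStep i t r 0 := by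
  rcases hms with hm | hs
  · rw [demazureStep_of_isMinus hm, replaceEntry, rowOf_eq_of_isSVT ht h, updateBox_same]
    exact mem_insert_self _ _
  · rw [demazureStep_of_isShared hs, eraseEntry, rowOf_eq_of_isSVT ht h, updateBox_same]
    exact mem_erase.mpr ⟨by omega, (hs.mem_iff ht).mp h⟩

theorem isPlus_demazureStep (ht : IsSVT n (colShape k) t) (hms : IsMinus i t ∨ IsShared i t) :
    IsPlus i (demazureStep i t) := by
  rcases hms with hm | hs
  · rw [demazureStep_of_isMinus hm]; exact isPlus_replaceEntry ht hm
  · rw [demazureStep_of_isShared hs]; exact isPlus_eraseEntry ht hs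

theorem mem_keyBounded_bumpKey (hm : StrictMonoOn m (Set.Iio k)) (ht : IsSVT n (colShape k) t)
    (hd : demazureStep i t ∈ keyBounded n k m) : t ∈ keyBounded n k (bumpKey k i m) := by
  refine ⟨ht, fun r hr a ha => ?_⟩
  by_cases hne : a = i + 1
  · subst hne
    by_cases hms : IsMinus i t ∨ IsShared i t
    · exact succ_le_bumpKey hm hd hr (mem_demazureStep_of_succ_mem ht ha hms)
        (isPlus_demazureStep ht hms).2
    · rw [not_or] at hms
      rw [demazureStep_of_not_isMinus_of_not_isShared hms.1 hms.2] at hd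
      exact (hd.2 r hr _ ha).trans (le_bumpKey r)
  · exact (hd.2 r hr a (mem_demazureStep_of_ne ha hne)).trans (le_bumpKey r)

theorem demazureStep_mem_keyBounded (hm : StrictMonoOn m (Set.Iio k)) (hi : 1 ≤ i)
    (ht : t ∈ keyBounded n k (bumpKey k i m)) : demazureStep i t ∈ keyBounded n k m := by
  refine ⟨isSVT_demazureStep ht.1 hi, fun r hr a ha => ?_⟩
  have hb := ht.2
  rcases mem_demazureStep ht.1 ha with ⟨ha, hne⟩ | ⟨hai, ha⟩ | ⟨rfl, ha, hnm, hns⟩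
  · have := hb r hr a ha
    rcases bumpKey_eq_or (k := k) (i := i) (m := m) r with h | h <;> omega
  · have := hb r hr _ ha
    rcases bumpKey_eq_or (k := k) (i := i) (m := m) r with h | h <;> omega
  · obtain ⟨r₂, h₂⟩ : Occurs t i := by
      by_contra h
      exact hnm ⟨⟨r, ha⟩, h⟩
    have hr₂ : r₂ < r := by
      rcases lt_trichotomy r₂ r with h | rfl | h
      · exact h
      · exact absurd ⟨r₂, h₂, ha⟩ hns
      · have := lt_of_mem_of_lt ht.1 ha h₂ h; omega
    have := hb r₂ (hr₂.trans hr) i h₂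
    have := hb r hr _ ha
    have := hm (hr₂.trans hr) hr hr₂
    rcases bumpKey_eq_or (k := k) (i := i) (m := m) r with h | h <;>
      rcases bumpKey_eq_or (k := k) (i := i) (m := m) r₂ with h' | h' <;> omega

theorem preimage_demazureStep_keyBounded (hm : StrictMonoOn m (Set.Iio k)) (hi : 1 ≤ i) :
    {t | IsSVT n (colShape k) t ∧ demazureStep i t ∈ keyBounded n k m} =
      keyBounded n k (bumpKey k i m) :=
  Set.ext fun _ => ⟨fun ⟨ht, hd⟩ => mem_keyBounded_bumpKey hm ht hd,
    fun h => ⟨h.1, demazureStep_mem_keyBounded hm hi h⟩⟩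

end Keys

theorem finite_isSVT_colShape (n k : ℕ) : {t | IsSVT n (colShape k) t}.Finite := by
  set F : Filling → Finset (ℕ × ℕ) := fun t =>
    (range k ×ˢ range (n + 1)).filter fun p => p.2 ∈ t p.1 0
  have hF : ∀ t, IsSVT n (colShape k) t → ∀ r a, r < k →
      (a ∈ t r 0 ↔ (r, a) ∈ F t) := by
    intro t ht r a hr
    simp only [F, mem_filter, mem_product, mem_range]
    exact ⟨fun h => ⟨⟨hr, Nat.lt_succ_of_le (ht.entryBounds r 0 a h).2⟩, h⟩,
      fun h => h.2⟩
  refine Set.Finite.of_finite_image (f := F) ?_ fun t₁ h₁ t₂ h₂ heq => ?_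
  · exact (range k ×ˢ range (n + 1)).powerset.finite_toSet.subset
      (by rintro _ ⟨t, -, rfl⟩; exact mem_coe.mpr (mem_powerset.mpr (filter_subset _ _)))
  · funext r c
    by_cases hrc : r < k ∧ c = 0
    · obtain ⟨hr, rfl⟩ := hrc
      ext a
      rw [hF t₁ h₁ r a hr, hF t₂ h₂ r a hr, show F t₁ = F t₂ from heq]
    · have hout : ¬ c < colShape k r := by unfold colShape; split <;> omega
      rw [h₁.emptyOutside r c hout, h₂.emptyOutside r c hout]

def betaMonomial (n : ℕ) (lam : ℕ → ℕ) (t : Filling) : KPoly :=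
  betaP ^ excess n lam t * xwt n lam t

def monomialAway (n : ℕ) (lam : ℕ → ℕ) (i : ℕ) (t : Filling) : KPoly :=
  ∏ j ∈ ((Icc 1 n).erase i).erase (i + 1), (MvPolynomial.X j : KPoly) ^ wt n lam t j

section Monomials

variable {n : ℕ} {lam : ℕ → ℕ} {t : Filling}

theorem charSet_eq_sum {S : Set Filling} (hS : S.Finite) :
    charSet n lam S = ∑ t ∈ hS.toFinset, betaMonomial n lam t := by
  rw [charSet, ← finsum_mem_coe_finset, Set.Finite.coe_toFinset]; rfl

theorem betaMonomial_eq {i : ℕ} (hi : 1 ≤ i) (hin : i < n) :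
    betaMonomial n lam t = betaP ^ excess n lam t * monomialAway n lam i t *
      MvPolynomial.X i ^ wt n lam t i * MvPolynomial.X (i + 1) ^ wt n lam t (i + 1) := by
  have h₁ : i ∈ Icc 1 n := mem_Icc.mpr ⟨hi, hin.le⟩
  have h₂ : i + 1 ∈ (Icc 1 n).erase i :=
    mem_erase.mpr ⟨by omega, mem_Icc.mpr ⟨by omega, hin⟩⟩
  rw [betaMonomial, xwt, monomialAway, ← mul_prod_erase _ _ h₁, ← mul_prod_erase _ _ h₂]
  ring

theorem rename_swap_betaP_pow_mul_monomialAway (i : ℕ) (e : ℕ) :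
    MvPolynomial.rename (Equiv.swap i (i + 1)) (betaP ^ e * monomialAway n lam i t) =
      betaP ^ e * monomialAway n lam i t := by
  rw [map_mul, map_pow, betaP, MvPolynomial.rename_C, monomialAway, map_prod]
  congr 1
  refine prod_congr rfl fun j hj => ?_
  rw [map_pow, MvPolynomial.rename_X, Equiv.swap_apply_of_ne_of_ne
    (mem_erase.mp (mem_of_mem_erase hj)).1 (mem_erase.mp hj).1]

theorem excess_updateBox_of_card_eq {r c : ℕ} {A : Finset ℕ} (h : A.card = (t r c).card) :
    excess n lam (updateBox t r c A) = excess n lam t := by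
  refine sum_congr rfl fun p _ => ?_
  unfold updateBox
  split_ifs with hp
  · rw [hp.1, hp.2, h]
  · rfl

theorem excess_replaceEntry {a b : ℕ} (ha : Occurs t a) (hb : ¬ Occurs t b) :
    excess n lam (replaceEntry t a b) = excess n lam t := by
  have hmem := rowOf_mem ha
  refine excess_updateBox_of_card_eq ?_
  rw [card_insert_of_notMem fun h => hb ⟨_, mem_of_mem_erase h⟩, card_erase_of_mem hmem]
  have := card_pos.mpr ⟨a, hmem⟩
  omega

variable {k : ℕ}

theorem excess_insertEntry (hk : 1 ≤ k) (hkn : k ≤ n) (ht : IsSVT n (colShape k) t) {a b : ℕ}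
    (ha : Occurs t a) (hb : ¬ Occurs t b) :
    excess n (colShape k) (insertEntry t a b) = excess n (colShape k) t + 1 := by
  have hr := (lt_and_eq_zero_of_mem ht (rowOf_mem ha)).1
  have hbox : ∀ p : ℕ × ℕ, (insertEntry t a b p.1 p.2).card - 1 =
      ((t p.1 p.2).card - 1) + if p = (rowOf t a, 0) then 1 else 0 := by
    rintro ⟨r', c⟩
    dsimp only
    by_cases hp : r' = rowOf t a ∧ c = 0
    · obtain ⟨rfl, rfl⟩ := hp
      have := card_pos.mpr (ht.boxNonempty _ 0 (colShape_pos_iff.mpr hr))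
      rw [insertEntry, updateBox_same, card_insert_of_notMem fun h => hb ⟨_, h⟩, if_pos rfl]
      omega
    · rw [insertEntry, updateBox_of_ne hp, if_neg fun h => hp (Prod.ext_iff.mp h)]
      rfl
  have hmem : (rowOf t a, 0) ∈ range n ×ˢ range (colShape k 0) := by
    simp only [mem_product, mem_range, colShape_zero hk]
    exact ⟨hr.trans_le hkn, one_pos⟩
  rw [excess, excess, sum_congr rfl fun p _ => hbox p, sum_add_distrib, sum_ite_eq', if_pos hmem]

theorem wt_colShape (hk : 1 ≤ k) (hkn : k ≤ n) (ht : IsSVT n (colShape k) t) (j : ℕ) :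
    wt n (colShape k) t j = if Occurs t j then 1 else 0 := by
  unfold wt
  split_ifs with h
  · obtain ⟨r, hr⟩ := h
    refine card_eq_one.mpr ⟨(r, 0), eq_singleton_iff_unique_mem.mpr ⟨?_, ?_⟩⟩
    · have := (lt_and_eq_zero_of_mem ht hr).1
      simp only [mem_filter, mem_product, mem_range, colShape_zero hk]
      exact ⟨⟨by omega, one_pos⟩, hr⟩
    · rintro ⟨r', c⟩ hp
      have hp : j ∈ t r' c := (mem_filter.mp hp).2
      obtain ⟨-, rfl⟩ := lt_and_eq_zero_of_mem ht hp
      rw [row_eq_of_mem ht hr hp]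
  · exact card_eq_zero.mpr (filter_eq_empty_iff.mpr fun p _ hp =>
      h ⟨p.1, (lt_and_eq_zero_of_mem ht hp).2 ▸ hp⟩)

/-- In a column every entry occurs at most once, so `x^{wt T}` only records which entries
occur. -/
theorem betaMonomial_colShape (hk : 1 ≤ k) (hkn : k ≤ n) {i : ℕ} (hi : 1 ≤ i) (hin : i < n)
    {t' : Filling} (ht : IsSVT n (colShape k) t) (ht' : IsSVT n (colShape k) t')
    (hoff : ∀ j, j ≠ i → j ≠ i + 1 → (Occurs t' j ↔ Occurs t j)) :
    betaMonomial n (colShape k) t' = betaP ^ excess n (colShape k) t' *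
      monomialAway n (colShape k) i t *
      (if Occurs t' i then MvPolynomial.X i else 1) *
      (if Occurs t' (i + 1) then MvPolynomial.X (i + 1) else 1) := by
  have haway : monomialAway n (colShape k) i t' = monomialAway n (colShape k) i t := by
    refine prod_congr rfl fun j hj => ?_
    rw [wt_colShape hk hkn ht', wt_colShape hk hkn ht,
      propext (hoff j (mem_erase.mp (mem_of_mem_erase hj)).1 (mem_erase.mp hj).1)]
  rw [betaMonomial_eq hi hin, haway, wt_colShape hk hkn ht', wt_colShape hk hkn ht']
  split_ifs <;> simp

end Monomials

section DemazureLascoux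

variable {n : ℕ} {DL : ℕ → KPoly → KPoly} {i : ℕ}

theorem X_sub_X_succ_ne_zero (i : ℕ) :
    (MvPolynomial.X i - MvPolynomial.X (i + 1) : KPoly) ≠ 0 :=
  sub_ne_zero.mpr fun h => by have := MvPolynomial.X_injective h; omega

theorem IsDLOp.apply_sum (hDL : IsDLOp n DL) (hi : 1 ≤ i) (hin : i < n) {ι : Type*}
    (s : Finset ι) (f : ι → KPoly) : DL i (∑ x ∈ s, f x) = ∑ x ∈ s, DL i (f x) := by
  apply mul_left_cancel₀ (X_sub_X_succ_ne_zero i)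
  rw [hDL i hi hin, DLnum, map_sum, mul_sum, mul_sum, mul_sum, ← sum_sub_distrib]
  exact sum_congr rfl fun x _ => (hDL i hi hin (f x)).symm

theorem IsDLOp.apply_of_rename_eq (hDL : IsDLOp n DL) (hi : 1 ≤ i) (hin : i < n) {c : KPoly}
    (hc : MvPolynomial.rename (Equiv.swap i (i + 1)) c = c) : DL i c = c := by
  apply mul_left_cancel₀ (X_sub_X_succ_ne_zero i)
  rw [hDL i hi hin, DLnum, hc]
  ring

theorem IsDLOp.apply_mul_X (hDL : IsDLOp n DL) (hi : 1 ≤ i) (hin : i < n) {c : KPoly}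
    (hc : MvPolynomial.rename (Equiv.swap i (i + 1)) c = c) :
    DL i (c * MvPolynomial.X i) = c * MvPolynomial.X i + c * MvPolynomial.X (i + 1)
      + betaP * c * (MvPolynomial.X i * MvPolynomial.X (i + 1)) := by
  apply mul_left_cancel₀ (X_sub_X_succ_ne_zero i)
  rw [hDL i hi hin, DLnum, map_mul, hc, MvPolynomial.rename_X, Equiv.swap_apply_left]
  ring

theorem IsDLOp.apply_mul_X_succ (hDL : IsDLOp n DL) (hi : 1 ≤ i) (hin : i < n) {c : KPoly}
    (hc : MvPolynomial.rename (Equiv.swap i (i + 1)) c = c) :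
    DL i (c * MvPolynomial.X (i + 1))
      = -(betaP * c * (MvPolynomial.X i * MvPolynomial.X (i + 1))) := by
  apply mul_left_cancel₀ (X_sub_X_succ_ne_zero i)
  rw [hDL i hi hin, DLnum, map_mul, hc, MvPolynomial.rename_X, Equiv.swap_apply_right]
  ring

variable {k : ℕ} {t : Filling}

theorem DL_betaMonomial_of_isPlus (hDL : IsDLOp n DL) (hk : 1 ≤ k) (hkn : k ≤ n) (hi : 1 ≤ i)
    (hin : i < n) (ht : IsSVT n (colShape k) t) (hp : IsPlus i t) :
    DL i (betaMonomial n (colShape k) t) = betaMonomial n (colShape k) t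
      + betaMonomial n (colShape k) (replaceEntry t i (i + 1))
      + betaMonomial n (colShape k) (insertEntry t i (i + 1)) := by
  set c := betaP ^ excess n (colShape k) t * monomialAway n (colShape k) i t
  have hR := isSVT_replaceEntry ht hp.1 hp.2 (Or.inr rfl) (by omega) hin
  have hI := isSVT_insertEntry ht hp.1 hp.2 (Or.inr rfl) (by omega) hin
  have hmR := isMinus_replaceEntry ht hp
  have hsI := (isShared_insertEntry_succ hp.1).occurs
  have h₀ : betaMonomial n (colShape k) t = c * MvPolynomial.X i := by
    rw [betaMonomial_colShape hk hkn hi hin ht ht fun _ _ _ => Iff.rfl, if_pos hp.1, if_neg hp.2]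
    ring
  have h₁ : betaMonomial n (colShape k) (replaceEntry t i (i + 1))
      = c * MvPolynomial.X (i + 1) := by
    rw [betaMonomial_colShape hk hkn hi hin ht hR fun j hj hj' => by
        simp [occurs_replaceEntry_iff ht hp.1, hj, hj'],
      excess_replaceEntry hp.1 hp.2, if_neg hmR.2, if_pos hmR.1]
    ring
  have h₂ : betaMonomial n (colShape k) (insertEntry t i (i + 1))
      = betaP * c * (MvPolynomial.X i * MvPolynomial.X (i + 1)) := by
    rw [betaMonomial_colShape hk hkn hi hin ht hI fun j _ hj' => by
        simp [occurs_insertEntry_iff, hj'],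
      excess_insertEntry hk hkn ht hp.1 hp.2, if_pos hsI.1, if_pos hsI.2, pow_succ]
    ring
  rw [h₀, h₁, h₂, hDL.apply_mul_X hi hin (rename_swap_betaP_pow_mul_monomialAway i _)]

theorem DL_betaMonomial_of_isMinus (hDL : IsDLOp n DL) (hk : 1 ≤ k) (hkn : k ≤ n) (hi : 1 ≤ i)
    (hin : i < n) (ht : IsSVT n (colShape k) t) (hm : IsMinus i t) :
    DL i (betaMonomial n (colShape k) t)
      = -betaMonomial n (colShape k) (insertEntry t (i + 1) i) := by
  set c := betaP ^ excess n (colShape k) t * monomialAway n (colShape k) i t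
  have hI := isSVT_insertEntry ht hm.1 hm.2 (Or.inl rfl) hi (by omega)
  have hsI := (isShared_insertEntry_pred hm.1).occurs
  have h₀ : betaMonomial n (colShape k) t = c * MvPolynomial.X (i + 1) := by
    rw [betaMonomial_colShape hk hkn hi hin ht ht fun _ _ _ => Iff.rfl, if_neg hm.2, if_pos hm.1]
    ring
  have h₂ : betaMonomial n (colShape k) (insertEntry t (i + 1) i)
      = betaP * c * (MvPolynomial.X i * MvPolynomial.X (i + 1)) := by
    rw [betaMonomial_colShape hk hkn hi hin ht hI fun j hj _ => by
        simp [occurs_insertEntry_iff, hj],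
      excess_insertEntry hk hkn ht hm.1 hm.2, if_pos hsI.1, if_pos hsI.2, pow_succ]
    ring
  rw [h₀, h₂, hDL.apply_mul_X_succ hi hin (rename_swap_betaP_pow_mul_monomialAway i _)]

theorem DL_betaMonomial_of_not_isPlus_of_not_isMinus (hDL : IsDLOp n DL) (hk : 1 ≤ k)
    (hkn : k ≤ n) (hi : 1 ≤ i) (hin : i < n) (ht : IsSVT n (colShape k) t)
    (hp : ¬ IsPlus i t) (hm : ¬ IsMinus i t) :
    DL i (betaMonomial n (colShape k) t) = betaMonomial n (colShape k) t := by
  have hiff : Occurs t (i + 1) ↔ Occurs t i :=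
    ⟨fun h => by_contra fun h' => hm ⟨h, h'⟩, fun h => by_contra fun h' => hp ⟨h, h'⟩⟩
  apply hDL.apply_of_rename_eq hi hin
  rw [betaMonomial_colShape hk hkn hi hin ht ht fun _ _ _ => Iff.rfl, hiff]
  split_ifs
  · rw [mul_assoc, map_mul, rename_swap_betaP_pow_mul_monomialAway, map_mul, MvPolynomial.rename_X,
      MvPolynomial.rename_X, Equiv.swap_apply_left, Equiv.swap_apply_right]
    ring
  · simp only [mul_one, rename_swap_betaP_pow_mul_monomialAway]

end DemazureLascoux

/-- The fibre of `demazureStep i` over `u` (`mem_stepFiber`): the top of the `i`-string of `u`. -/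
def stepFiber (i : ℕ) (u : Filling) : Finset Filling :=
  if IsPlus i u then {u, replaceEntry u i (i + 1), insertEntry u i (i + 1)}
  else if IsMinus i u ∨ IsShared i u then ∅ else {u}

section StepCharacter

variable {n k i : ℕ} {u : Filling}

theorem mem_stepFiber (hu : IsSVT n (colShape k) u) (hi : 1 ≤ i) (hin : i < n) {t : Filling} :
    t ∈ stepFiber i u ↔ IsSVT n (colShape k) t ∧ demazureStep i t = u := by
  constructor
  · intro h
    unfold stepFiber at h
    split_ifs at h with hp hms
    · simp only [mem_insert, mem_singleton] at h
      rcases h with rfl | rfl | rfl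
      · exact ⟨hu, demazureStep_of_not_isMinus_of_not_isShared hp.not_isMinus
          fun h => h.not_isPlus hp⟩
      · refine ⟨isSVT_replaceEntry hu hp.1 hp.2 (Or.inr rfl) (by omega) hin, ?_⟩
        rw [demazureStep_of_isMinus (isMinus_replaceEntry hu hp),
          replaceEntry_replaceEntry hp.1 hp.2]
      · refine ⟨isSVT_insertEntry hu hp.1 hp.2 (Or.inr rfl) (by omega) hin, ?_⟩
        rw [demazureStep_of_isShared (isShared_insertEntry_succ hp.1),
          eraseEntry_insertEntry hp.2]
    · simp at h
    · rw [mem_singleton] at h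
      subst h
      rw [not_or] at hms
      exact ⟨hu, demazureStep_of_not_isMinus_of_not_isShared hms.1 hms.2⟩
  · rintro ⟨ht, rfl⟩
    by_cases hm : IsMinus i t
    · rw [stepFiber, if_pos (isPlus_demazureStep ht (Or.inl hm)), demazureStep_of_isMinus hm,
        replaceEntry_replaceEntry hm.1 hm.2]
      exact mem_insert_of_mem (mem_insert_self _ _)
    by_cases hs : IsShared i t
    · obtain ⟨r, h₀, h₁⟩ := hs
      rw [stepFiber, if_pos (isPlus_demazureStep ht (Or.inr ⟨r, h₀, h₁⟩)),
        demazureStep_of_isShared ⟨r, h₀, h₁⟩,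
        insertEntry_eraseEntry ht h₀ h₁ (by omega)]
      exact mem_insert_of_mem (mem_insert_of_mem (mem_singleton_self _))
    rw [demazureStep_of_not_isMinus_of_not_isShared hm hs, stepFiber]
    split_ifs with hp hms
    · exact mem_insert_self _ _
    · exact absurd hms (by tauto)
    · exact mem_singleton_self _

theorem sum_stepFiber (hu : IsSVT n (colShape k) u) (f : Filling → KPoly) :
    ∑ t ∈ stepFiber i u, f t =
      if IsPlus i u then f u + f (replaceEntry u i (i + 1)) + f (insertEntry u i (i + 1))
      else if IsMinus i u ∨ IsShared i u then 0 else f u := by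
  unfold stepFiber
  split_ifs with hp
  · have hmR := isMinus_replaceEntry hu hp
    have hsI := isShared_insertEntry_succ hp.1
    have h₁ : u ≠ replaceEntry u i (i + 1) := fun h => hp.not_isMinus (h ▸ hmR)
    have h₂ : u ≠ insertEntry u i (i + 1) := fun h => hsI.not_isPlus (h ▸ hp)
    have h₃ : replaceEntry u i (i + 1) ≠ insertEntry u i (i + 1) :=
      fun h => hsI.not_isMinus (h ▸ hmR)
    rw [sum_insert (by simp [h₁, h₂]), sum_pair h₃, add_assoc]
  · rfl
  · rw [sum_singleton]

variable {DL : ℕ → KPoly → KPoly}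

theorem DL_betaMonomial_eq (hDL : IsDLOp n DL) (hk : 1 ≤ k) (hkn : k ≤ n) (hi : 1 ≤ i)
    (hin : i < n) (hu : IsSVT n (colShape k) u) :
    DL i (betaMonomial n (colShape k) u) = ∑ t ∈ stepFiber i u, betaMonomial n (colShape k) t
      + (if IsShared i u then betaMonomial n (colShape k) u else 0)
      - (if IsMinus i u then betaMonomial n (colShape k) (insertEntry u (i + 1) i) else 0) := by
  rw [sum_stepFiber hu]
  by_cases hp : IsPlus i u
  · rw [DL_betaMonomial_of_isPlus hDL hk hkn hi hin hu hp, if_pos hp,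
      if_neg fun h => h.not_isPlus hp, if_neg hp.not_isMinus]
    ring
  by_cases hm : IsMinus i u
  · rw [DL_betaMonomial_of_isMinus hDL hk hkn hi hin hu hm, if_neg hp, if_pos (Or.inl hm),
      if_neg fun h => h.not_isMinus hm, if_pos hm]
    ring
  rw [DL_betaMonomial_of_not_isPlus_of_not_isMinus hDL hk hkn hi hin hu hp hm, if_neg hp, if_neg hm]
  by_cases hs : IsShared i u
  · rw [if_pos (Or.inr hs), if_pos hs]; ring
  · rw [if_neg (by tauto), if_neg hs]; ring

theorem insertEntry_mem_keyBounded (hi : 1 ≤ i) {m : ℕ → ℕ} (hu : u ∈ keyBounded n k m)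
    (hm : IsMinus i u) : insertEntry u (i + 1) i ∈ keyBounded n k m := by
  obtain ⟨ht, hb⟩ := hu
  have hle := (ht.entryBounds _ _ _ (rowOf_mem hm.1)).2
  refine ⟨isSVT_insertEntry ht hm.1 hm.2 (Or.inl rfl) hi (by omega), fun r hr a ha => ?_⟩
  rw [insertEntry, mem_updateBox_iff] at ha
  rcases ha with ⟨rfl, ha'⟩ | ⟨-, ha'⟩
  · rcases mem_insert.mp ha' with rfl | ha'
    · have := hb _ hr _ (rowOf_mem hm.1); omega
    · exact hb _ hr a ha'
  · exact hb r hr a ha'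

theorem eraseEntry_mem_keyBounded {m : ℕ → ℕ} (hu : u ∈ keyBounded n k m) {r a b : ℕ}
    (ha : a ∈ u r 0) (hb : b ∈ u r 0) (hab : b ≠ a) :
    eraseEntry u a ∈ keyBounded n k m := by
  refine ⟨isSVT_eraseEntry hu.1 ha hb hab, fun r' hr' x hx => ?_⟩
  rw [eraseEntry, mem_updateBox_iff] at hx
  rcases hx with ⟨rfl, hx'⟩ | ⟨-, hx'⟩
  exacts [hu.2 _ hr' x (mem_of_mem_erase hx'), hu.2 r' hr' x hx']

/-- Adding `i` to the box of `i+1` matches the two sides bijectively. -/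
theorem sum_isShared_eq_sum_isMinus (hi : 1 ≤ i) {m : ℕ → ℕ}
    (hX : (keyBounded n k m).Finite) :
    ∑ u ∈ hX.toFinset, (if IsShared i u then betaMonomial n (colShape k) u else 0) =
      ∑ u ∈ hX.toFinset,
        (if IsMinus i u then betaMonomial n (colShape k) (insertEntry u (i + 1) i) else 0) := by
  rw [← sum_filter, ← sum_filter]
  symm
  refine sum_nbij' (fun u => insertEntry u (i + 1) i) (fun u => eraseEntry u i) ?_ ?_ ?_ ?_
    fun _ _ => rfl
  · intro u hu
    simp only [mem_filter, Set.Finite.mem_toFinset] at hu ⊢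
    exact ⟨insertEntry_mem_keyBounded hi hu.1 hu.2, isShared_insertEntry_pred hu.2.1⟩
  · intro u hu
    simp only [mem_filter, Set.Finite.mem_toFinset] at hu ⊢
    obtain ⟨hu, r, h₀, h₁⟩ := hu
    exact ⟨eraseEntry_mem_keyBounded hu h₀ h₁ (by omega),
      isMinus_eraseEntry hu.1 ⟨r, h₀, h₁⟩⟩
  · intro u hu
    exact eraseEntry_insertEntry (mem_filter.mp hu).2.2
  · intro u hu
    obtain ⟨hu, r, h₀, h₁⟩ := mem_filter.mp hu
    exact insertEntry_eraseEntry ((Set.Finite.mem_toFinset _).mp hu).1 h₁ h₀ (by omega)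

theorem charSet_preimage_demazureStep (hDL : IsDLOp n DL) (hk : 1 ≤ k) (hkn : k ≤ n)
    (hi : 1 ≤ i) (hin : i < n) (m : ℕ → ℕ) :
    charSet n (colShape k) {t | IsSVT n (colShape k) t ∧ demazureStep i t ∈ keyBounded n k m}
      = DL i (charSet n (colShape k) (keyBounded n k m)) := by
  have hX : (keyBounded n k m).Finite := (finite_isSVT_colShape n k).subset fun _ h => h.1
  have hX' : {t | IsSVT n (colShape k) t ∧ demazureStep i t ∈ keyBounded n k m}.Finite :=
    (finite_isSVT_colShape n k).subset fun _ h => h.1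
  have hfiber : ∀ u ∈ hX.toFinset,
      hX'.toFinset.filter (fun t => demazureStep i t = u) = stepFiber i u := by
    intro u hu
    rw [Set.Finite.mem_toFinset] at hu
    ext t
    rw [mem_filter, Set.Finite.mem_toFinset, mem_stepFiber hu.1 hi hin]
    exact ⟨fun ⟨⟨ht, _⟩, he⟩ => ⟨ht, he⟩,
      fun ⟨ht, he⟩ => ⟨⟨ht, he ▸ hu⟩, he⟩⟩
  rw [charSet_eq_sum hX', charSet_eq_sum hX, hDL.apply_sum hi hin,
    ← sum_fiberwise_of_maps_to (g := demazureStep i)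
      fun t ht => hX.mem_toFinset.mpr (hX'.mem_toFinset.mp ht).2,
    sum_congr rfl fun u hu => by rw [hfiber u hu],
    sum_congr rfl fun u hu => DL_betaMonomial_eq hDL hk hkn hi hin (hX.mem_toFinset.mp hu).1,
    sum_sub_distrib, sum_add_distrib, sum_isShared_eq_sum_isMinus hi hX, add_sub_cancel_right]

end StepCharacter

section BaseCase

variable {n k : ℕ}

theorem mem_uTab_colShape {r c a : ℕ} :
    a ∈ uTab (colShape k) r c ↔ r < k ∧ c = 0 ∧ a = r + 1 := by
  unfold uTab colShape
  split_ifs <;> simp <;> omega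

theorem isSVT_uTab (hkn : k ≤ n) : IsSVT n (colShape k) (uTab (colShape k)) where
  boxNonempty r c hc := ⟨r + 1, by unfold uTab; rw [if_pos hc]; exact mem_singleton_self _⟩
  emptyOutside r c hc := by unfold uTab; rw [if_neg hc]
  entryBounds r c a ha := by rw [mem_uTab_colShape] at ha; omega
  rowWeak r c a b _ hb := by rw [mem_uTab_colShape] at hb; omega
  colStrict r c a b ha hb := by rw [mem_uTab_colShape] at ha hb; omega

theorem succ_le_of_mem {t : Filling} (ht : IsSVT n (colShape k) t) {r a : ℕ} (ha : a ∈ t r 0) :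
    r + 1 ≤ a := by
  induction r generalizing a with
  | zero => exact (ht.entryBounds _ _ _ ha).1
  | succ r ih =>
    obtain ⟨b, hb⟩ := ht.boxNonempty r 0
      (colShape_pos_iff.mpr (by have := (lt_and_eq_zero_of_mem ht ha).1; omega))
    have := ih hb
    have := ht.colStrict r 0 b a hb ha
    omega

theorem keyBounded_wordKey_nil (hkn : k ≤ n) :
    keyBounded n k (wordKey k []) = {uTab (colShape k)} := by
  ext t
  simp only [keyBounded, wordKey, Set.mem_ofPred_eq, Set.mem_singleton_iff]
  constructor
  · rintro ⟨ht, hb⟩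
    funext r c
    ext a
    rw [mem_uTab_colShape]
    constructor
    · intro ha
      obtain ⟨hr, rfl⟩ := lt_and_eq_zero_of_mem ht ha
      have := succ_le_of_mem ht ha
      have := hb r hr a ha
      exact ⟨hr, rfl, by omega⟩
    · rintro ⟨hr, rfl, rfl⟩
      obtain ⟨b, hb'⟩ := ht.boxNonempty r 0 (colShape_pos_iff.mpr hr)
      have := succ_le_of_mem ht hb'
      have := hb r hr b hb'
      obtain rfl : b = r + 1 := by omega
      exact hb'
  · rintro rfl
    exact ⟨isSVT_uTab hkn, fun r _ a ha => by rw [mem_uTab_colShape] at ha; omega⟩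

theorem kDem_nil (hkn : k ≤ n) :
    KDem n (colShape k) (eK n (colShape k)) [] = {uTab (colShape k)} := by
  ext t
  simp only [KDem, DemReach, Set.mem_ofPred_eq, Set.mem_singleton_iff]
  exact ⟨fun h => h.2, by rintro rfl; exact ⟨isSVT_uTab hkn, rfl⟩⟩

theorem charSet_uTab (hk : 1 ≤ k) (hkn : k ≤ n) :
    charSet n (colShape k) {uTab (colShape k)} = ∏ j ∈ Icc 1 k, (MvPolynomial.X j : KPoly) := by
  have hex : excess n (colShape k) (uTab (colShape k)) = 0 :=
    sum_eq_zero fun p _ => by unfold uTab; split_ifs <;> simp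
  have hwt : ∀ j, wt n (colShape k) (uTab (colShape k)) j = if j ∈ Icc 1 k then 1 else 0 := by
    intro j
    rw [wt_colShape hk hkn (isSVT_uTab hkn)]
    simp only [Occurs, mem_uTab_colShape, mem_Icc]
    congr 1
    exact propext ⟨fun ⟨r, hr, _, hj⟩ => by omega,
      fun h => ⟨j - 1, by omega, trivial, by omega⟩⟩
  rw [charSet, finsum_mem_singleton, hex, pow_zero, one_mul, xwt,
    ← prod_subset (Icc_subset_Icc_right hkn) fun j _ hj => by rw [hwt, if_neg hj, pow_zero]]
  exact prod_congr rfl fun j hj => by rw [hwt, if_pos hj, pow_one]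

end BaseCase

section Induction

variable {n k : ℕ}

theorem kDem_eq_keyBounded (hk : 1 ≤ k) (hkn : k ≤ n) (word : List ℕ)
    (hw : ∀ j ∈ word, 1 ≤ j) :
    KDem n (colShape k) (eK n (colShape k)) word = keyBounded n k (wordKey k word) := by
  induction word with
  | nil => rw [kDem_nil hkn, keyBounded_wordKey_nil hkn]
  | cons i rest ih =>
    rw [kDem_cons hk hkn (hw i List.mem_cons_self) rest,
      ih fun j hj => hw j (List.mem_cons_of_mem i hj),
      preimage_demazureStep_keyBounded (strictMonoOn_wordKey rest) (hw i List.mem_cons_self)]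
    rfl

theorem charSet_kDem {DL : ℕ → KPoly → KPoly} (hDL : IsDLOp n DL) (hk : 1 ≤ k)
    (hkn : k ≤ n) (word : List ℕ) (hw : ∀ j ∈ word, 1 ≤ j ∧ j < n) :
    charSet n (colShape k) (KDem n (colShape k) (eK n (colShape k)) word) =
      applyDL DL word (∏ j ∈ Icc 1 k, (MvPolynomial.X j : KPoly)) := by
  induction word with
  | nil => rw [kDem_nil hkn, charSet_uTab hk hkn]; rfl
  | cons i rest ih =>
    have hrest : ∀ j ∈ rest, 1 ≤ j ∧ j < n := fun j hj => hw j (List.mem_cons_of_mem i hj)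
    obtain ⟨hi, hin⟩ := hw i List.mem_cons_self
    rw [kDem_cons hk hkn hi rest, kDem_eq_keyBounded hk hkn rest fun j hj => (hrest j hj).1,
      charSet_preimage_demazureStep hDL hk hkn hi hin,
      ← kDem_eq_keyBounded hk hkn rest fun j hj => (hrest j hj).1, ih hrest]
    rfl

end Induction

/-- Gale order on finite sets of naturals. -/
def GaleLE (T S : Finset ℕ) : Prop := ∀ j, #(T.filter (j ≤ ·)) ≤ #(S.filter (j ≤ ·))

/-- The 0-Hecke generator `π_i` acting on finite sets. -/
def demazureSwap (i : ℕ) (S : Finset ℕ) : Finset ℕ :=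
  if i ∈ S ∧ i + 1 ∉ S then S.image (Equiv.swap i (i + 1)) else S

section Gale

variable {i : ℕ}

theorem card_filter_le_eq (X : Finset ℕ) (j : ℕ) :
    #(X.filter (j ≤ ·)) = #(X.filter (j + 1 ≤ ·)) + if j ∈ X then 1 else 0 := by
  rw [card_filter, card_filter, ← sum_ite_eq' X j fun _ => 1, ← sum_add_distrib]
  exact sum_congr rfl fun x _ => by split_ifs <;> omega

theorem card_filter_image_swap (X : Finset ℕ) {j : ℕ} (hj : j ≠ i + 1) :
    #((X.image (Equiv.swap i (i + 1))).filter (j ≤ ·)) = #(X.filter (j ≤ ·)) := by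
  rw [filter_image, card_image_of_injective _ (Equiv.injective _)]
  congr 1
  exact filter_congr fun x _ => by rw [Equiv.swap_apply_def]; split_ifs <;> omega

theorem card_filter_image_swap_succ (X : Finset ℕ) :
    #((X.image (Equiv.swap i (i + 1))).filter (i + 1 ≤ ·)) =
      #(X.filter (i + 1 + 1 ≤ ·)) + if i ∈ X then 1 else 0 := by
  have hmem : i + 1 ∈ X.image (Equiv.swap i (i + 1)) ↔ i ∈ X := by
    rw [mem_image]
    constructor
    · rintro ⟨x, hx, he⟩
      rwa [← Equiv.swap_apply_self i (i + 1) x, he, Equiv.swap_apply_right] at hx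
    · exact fun h => ⟨i, h, Equiv.swap_apply_left _ _⟩
  rw [card_filter_le_eq, card_filter_image_swap X (by omega : i + 1 + 1 ≠ i + 1)]
  simp only [hmem]

/-- This is why the Demazure product of a word dominates its ordinary product. -/
theorem GaleLE.image_swap_demazureSwap {T S : Finset ℕ} (h : GaleLE T S) (i : ℕ) :
    GaleLE (T.image (Equiv.swap i (i + 1))) (demazureSwap i S) := by
  intro j
  by_cases hj : j = i + 1
  · subst hj
    have hT := card_filter_le_eq T i
    have hT' := card_filter_le_eq T (i + 1)
    have hS := card_filter_le_eq S i
    have hS' := card_filter_le_eq S (i + 1)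
    have h₀ := h i
    have h₂ := h (i + 1 + 1)
    have hle : (if i ∈ T then 1 else 0) ≤ 1 := by split_ifs <;> omega
    unfold demazureSwap
    split_ifs with hsw
    · rw [card_filter_image_swap_succ, card_filter_image_swap_succ, if_pos hsw.1]
      omega
    · rw [card_filter_image_swap_succ]
      by_cases hi1S : i + 1 ∈ S
      · rw [if_pos hi1S] at hS'
        omega
      · rw [if_neg hi1S] at hS'
        rw [if_neg fun h => hsw ⟨h, hi1S⟩] at hS
        omega
  · rw [card_filter_image_swap T hj]
    unfold demazureSwap
    split_ifs
    · rw [card_filter_image_swap S hj]; exact h j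
    · exact h j

end Gale

section LongestWord

variable {n k : ℕ}

theorem wordPerm_cons (i : ℕ) (word : List ℕ) :
    wordPerm (i :: word) = Equiv.swap i (i + 1) * wordPerm word := by
  rw [wordPerm, List.map_cons, List.prod_cons]; rfl

theorem image_bumpKey (k i : ℕ) (m : ℕ → ℕ) :
    (range k).image (bumpKey k i m) = demazureSwap i ((range k).image m) := by
  unfold demazureSwap
  split_ifs with hsw
  · rw [image_image]
    refine image_congr fun r hr => ?_
    have hr : r < k := mem_range.mp hr
    have hfree : ∀ r' < k, m r' ≠ i + 1 := fun r' hr' h =>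
      hsw.2 (mem_image.mpr ⟨r', mem_range.mpr hr', h⟩)
    by_cases h : m r = i
    · rw [bumpKey, if_pos ⟨hr, h, hfree⟩, Function.comp_apply, h, Equiv.swap_apply_left]
    · rw [bumpKey, if_neg fun hc => h hc.2.1, Function.comp_apply,
        Equiv.swap_apply_of_ne_of_ne h (hfree r hr)]
  · refine image_congr fun r hr => ?_
    unfold bumpKey
    rw [if_neg]
    rintro ⟨hr, h, hfree⟩
    exact hsw ⟨mem_image.mpr ⟨r, mem_range.mpr hr, h⟩,
      fun h' => by
        obtain ⟨r', hr', h'⟩ := mem_image.mp h'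
        exact hfree r' (mem_range.mp hr') h'⟩

theorem galeLE_wordPerm_wordKey (word : List ℕ) :
    GaleLE ((Icc 1 k).image (wordPerm word)) ((range k).image (wordKey k word)) := by
  induction word with
  | nil =>
    have : (range k).image (wordKey k []) = (Icc 1 k).image (wordPerm []) := by
      ext x
      simp only [mem_image, mem_range, mem_Icc, wordKey, wordPerm, List.map_nil, List.prod_nil,
        Equiv.Perm.coe_one, id_eq]
      exact ⟨fun ⟨r, hr, h⟩ => ⟨x, by omega, rfl⟩,
        fun ⟨y, hy, h⟩ => ⟨x - 1, by omega, by omega⟩⟩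
    exact this ▸ fun _ => le_rfl
  | cons i rest ih =>
    rw [wordPerm_cons, wordKey, image_bumpKey, Equiv.Perm.coe_mul, ← image_image]
    exact ih.image_swap_demazureSwap i

/-- Above the threshold `n + 1 - k + r` the image of `{1,…,k}` has `k - r` elements, while a
strictly increasing key whose row `r` lies below it has at most `k - r - 1`. -/
theorem le_wordKey_of_reverse (hkn : k ≤ n) {word : List ℕ}
    (hw0 : ∀ x, 1 ≤ x → x ≤ n → wordPerm word x = n + 1 - x) {r : ℕ} (hr : r < k) :
    n + 1 - k + r ≤ wordKey k word r := by
  by_contra! hlt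
  have hlower : k - r ≤ #(((Icc 1 k).image (wordPerm word)).filter (n + 1 - k + r ≤ ·)) := by
    calc k - r = #((Icc 1 (k - r)).image (wordPerm word)) := by
          rw [card_image_of_injective _ (Equiv.injective _), Nat.card_Icc]; omega
      _ ≤ _ := card_le_card fun y hy => by
          obtain ⟨x, hx, rfl⟩ := mem_image.mp hy
          rw [mem_Icc] at hx
          rw [mem_filter, hw0 x hx.1 (by omega)]
          exact ⟨mem_image.mpr ⟨x, mem_Icc.mpr ⟨hx.1, by omega⟩, hw0 x hx.1 (by omega)⟩,
            by omega⟩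
  have hupper :
      #(((range k).image (wordKey k word)).filter (n + 1 - k + r ≤ ·)) ≤ k - r - 1 := by
    calc _ ≤ #((Ico (r + 1) k).image (wordKey k word)) := card_le_card fun y hy => by
          obtain ⟨hy, hle⟩ := mem_filter.mp hy
          obtain ⟨r', hr', rfl⟩ := mem_image.mp hy
          have hr' := mem_range.mp hr'
          refine mem_image.mpr ⟨r', mem_Ico.mpr ⟨?_, hr'⟩, rfl⟩
          by_contra! h
          have := (strictMonoOn_wordKey word).monotoneOn hr' hr (Nat.lt_succ_iff.mp h)
          omega
      _ ≤ k - r - 1 := card_image_le.trans (by rw [Nat.card_Ico]; omega)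
  have := galeLE_wordPerm_wordKey (k := k) word (n + 1 - k + r)
  omega

theorem keyBounded_eq_setOf_isSVT {m : ℕ → ℕ} (hm : ∀ r < k, n + 1 - k + r ≤ m r) :
    keyBounded n k m = {t | IsSVT n (colShape k) t} :=
  Set.ext fun _ => ⟨fun h => h.1, fun ht => ⟨ht, fun r hr a ha => by
    have := add_le_of_mem ht ha
    have := hm r hr
    omega⟩⟩

end LongestWord

theorem kdem_column_character_general (n k : ℕ) (hk1 : 1 ≤ k) (hkn : k ≤ n)
    (DL : ℕ → KPoly → KPoly) (hDL : IsDLOp n DL) :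
    (∀ (w : Equiv.Perm ℕ) (word : List ℕ), IsReducedWord n w word →
      charSet n (colShape k) (KDem n (colShape k) (eK n (colShape k)) word) =
        applyDL DL word (∏ j ∈ Finset.Icc 1 k, (MvPolynomial.X j : KPoly))) ∧
    (∀ word0 : List ℕ, IsReducedWord n (wordPerm word0) word0 →
      (∀ x, 1 ≤ x → x ≤ n → wordPerm word0 x = n + 1 - x) →
      KDem n (colShape k) (eK n (colShape k)) word0 = {t | IsSVT n (colShape k) t} ∧
      applyDL DL word0 (∏ j ∈ Finset.Icc 1 k, (MvPolynomial.X j : KPoly)) =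
        Groth n (colShape k)) := by
  refine ⟨fun _ word hred => charSet_kDem hDL hk1 hkn word hred.1, fun word0 hred hw0 => ?_⟩
  have hall : KDem n (colShape k) (eK n (colShape k)) word0 = {t | IsSVT n (colShape k) t} := by
    rw [kDem_eq_keyBounded hk1 hkn word0 fun j hj => (hred.1 j hj).1]
    exact keyBounded_eq_setOf_isSVT fun r hr => le_wordKey_of_reverse hkn hw0 hr
  refine ⟨hall, ?_⟩
  rw [← charSet_kDem hDL hk1 hkn word0 hred.1, hall]
  rfl

/-- for the one-column shape `(1ᵏ)`, the β-character of the K-Demazure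
crystal of any reduced word `(i₁,…,iℓ)` of `w ∈ Sₙ` is the Lascoux polynomial
`ϖ_{i₁} ⋯ ϖ_{iℓ}(x₁⋯x_k)`.  In particular, for any reduced word of the longest element
`w₀`, the K-Demazure crystal is all of `SVT^n((1ᵏ))` and
`ϖ_{w₀}(x₁⋯x_k) = 𝔊_{(1ᵏ)}(x₁,…,xₙ;β)`. -/
theorem kdem_column_character (n k : ℕ) (hn : 2 ≤ n) (hk1 : 1 ≤ k) (hkn : k ≤ n)
    (DL : ℕ → KPoly → KPoly) (hDL : IsDLOp n DL) :
    (∀ (w : Equiv.Perm ℕ) (word : List ℕ), IsReducedWord n w word →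
      charSet n (colShape k) (KDem n (colShape k) (eK n (colShape k)) word) =
        applyDL DL word (∏ j ∈ Finset.Icc 1 k, (MvPolynomial.X j : KPoly))) ∧
    (∀ word0 : List ℕ, IsReducedWord n (wordPerm word0) word0 →
      (∀ x, 1 ≤ x → x ≤ n → wordPerm word0 x = n + 1 - x) →
      KDem n (colShape k) (eK n (colShape k)) word0 = {t | IsSVT n (colShape k) t} ∧
      applyDL DL word0 (∏ j ∈ Finset.Icc 1 k, (MvPolynomial.X j : KPoly)) =
        Groth n (colShape k)) :=
  kdem_column_character_general n k hk1 hkn DL hDL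

end SVTCrystal

end
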